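/- arXiv:1111.2945 — 7 statements merged into one kernel-verified Lean document; each statement's English description precedes it below -/
import Mathlib

section
/- Let h ≥ 0. Then (1+q)·f_h(q) − μ(f_h)·q^{h/2+1} = f_{h+1}(q) as polynomials (where the middle term is understood to be 0 when h is odd, since then μ(f_h) = 0). -/
/-!
Put `P_h = (1 - q)(1 + q)^h`, whose coefficient of `q^j` is `binom(h,j) − binom(h,j−1)`; then
`f_h` is `P_h` truncated to degree `⌊h/2⌋`, and `P_{h+1} = (1 + q) P_h` is Pascal's rule.
Multiplying the truncation by `1 + q` gives the truncation of `P_{h+1}` plus one overflowing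
term `μ q^{⌊h/2⌋+1}`. For even `h` that term lies beyond degree `⌊(h+1)/2⌋` and is subtracted;
for odd `h = 2m+1` it is kept, and matches because the coefficient of `q^{m+1}` in `P_h`
vanishes by the symmetry `binom(2m+1, m+1) = binom(2m+1, m)`.
-/

open Polynomial

/-- The polynomial `f_h(q)` whose coefficient of `q^j`, for `0 ≤ j ≤ ⌊h/2⌋`, is the
Catalan-triangle entry `binom(h,j) − binom(h,j−1)` (with `binom(h,−1) = 0`). -/
noncomputable def catalanF (h : ℕ) : Polynomial ℤ :=
  ∑ j ∈ Finset.range (h / 2 + 1),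
    C ((h.choose j : ℤ) - if j = 0 then 0 else (h.choose (j - 1) : ℤ)) * X ^ j

lemma Polynomial.coeff_one_add_X_mul_succ {R : Type*} [Semiring R] (p : R[X]) (n : ℕ) :
    ((1 + X) * p).coeff (n + 1) = p.coeff (n + 1) + p.coeff n := by
  rw [add_mul, one_mul, coeff_add, coeff_X_mul]

noncomputable def ballotPoly (h : ℕ) : ℤ[X] := (1 - X) * (1 + X) ^ h

lemma ballotPoly_succ (h : ℕ) : ballotPoly (h + 1) = (1 + X) * ballotPoly h := by
  rw [ballotPoly, ballotPoly]
  ring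

lemma coeff_ballotPoly (h n : ℕ) : (ballotPoly h).coeff n =
    (h.choose n : ℤ) - if n = 0 then 0 else (h.choose (n - 1) : ℤ) := by
  rcases n with _ | n <;> simp [ballotPoly, sub_mul, coeff_X_mul, coeff_one_add_X_pow]

lemma coeff_ballotPoly_odd_middle (m : ℕ) : (ballotPoly (2 * m + 1)).coeff (m + 1) = 0 := by
  rw [coeff_ballotPoly, if_neg m.succ_ne_zero, Nat.add_sub_cancel, Nat.choose_symm_half, sub_self]

lemma coeff_catalanF (h n : ℕ) :
    (catalanF h).coeff n = if n ≤ h / 2 then (ballotPoly h).coeff n else 0 := by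
  simp only [catalanF, finsetSum_coeff, coeff_C_mul_X_pow, coeff_ballotPoly, Finset.sum_ite_eq,
    Finset.mem_range, Nat.lt_succ_iff]

theorem stmt0 (h : ℕ) :
    (1 + X) * catalanF h -
      (if Even h then C ((catalanF h).coeff (h / 2)) * X ^ (h / 2 + 1) else 0) =
    catalanF (h + 1) := by
  ext (_ | n)
  · simp [coeff_catalanF, ballotPoly_succ, apply_ite (coeff · 0)]
  · simp only [coeff_sub, coeff_one_add_X_mul_succ, coeff_catalanF, ballotPoly_succ,
      apply_ite (coeff · (n + 1)), coeff_C_mul_X_pow, coeff_zero, le_refl, if_true]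
    rcases lt_trichotomy n (h / 2) with hn | hn | hn
    · have hn' : n + 1 ≤ (h + 1) / 2 := by omega
      simp [hn, hn.le, hn.ne, hn']
    · obtain ⟨m, rfl | rfl⟩ := Nat.even_or_odd' h
      · obtain rfl : n = m := by omega
        have half : (2 * n + 1) / 2 = n := by omega
        simp [half]
      · obtain rfl : n = m := by omega
        have half : (2 * n + 1 + 1) / 2 = n + 1 := by omega
        simp [← hn, half, coeff_ballotPoly_odd_middle]
    · have hn' : ¬ n + 1 ≤ (h + 1) / 2 := by omega
      simp [hn.not_gt, hn.not_ge, hn.ne', hn']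
end

section
/- A permutation π ∈ S_{n+1} is boolean if and only if π is the product of some subsequence of the word (s_1, s_2, …, s_{n−1}, s_n, s_{n−1}, …, s_2, s_1); that is, the boolean elements of S_{n+1} are exactly the elements lying below the top transposition (1, n+1) in Bruhat order. -/
/-!
A reduced boolean expression `s_{j_1} ⋯ s_{j_k} ⋯ s_{j_1}` is built from `s_{j_k}` by wrapping
with letters `s_j`; the product of the inner word is a transposition `(a b)`, and if `s_j` commuted
with it the wrapping could be cancelled, contradicting reducedness. So the letters always form an
interval `[a, b)` that grows by one adjacent letter on the left or on the right.

Subword products are multiplicative: the set of subword products of a word is the product of the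
sets `{1, s_j}` over its letters. On these sets the commutation and braid relations still hold
(`{1,s}{1,t}{1,s} = {1,t}{1,s}{1,t}`), which lets one move every right-hand wrapping letter inwards
and shows that each interval word has no more subword products than `s_a ⋯ s_{b-1} ⋯ s_a`, a
subword of the top word. Conversely the top word is itself a boolean expression; it is reduced
because its product, the transposition `(1 n+1)`, has `2n - 1` inversions.
-/

/-- The `i`-th adjacent transposition `s_{i+1}` (1-indexed `s_1, …, s_n`) in the
symmetric group `S_{n+1}`, realized as permutations of `Fin (n+1)`. -/
def adjTransposition (n : ℕ) (i : Fin n) : Equiv.Perm (Fin (n + 1)) :=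
  Equiv.swap i.castSucc i.succ

/-- The product of a word in the adjacent transpositions. -/
def wordProdA (n : ℕ) (w : List (Fin n)) : Equiv.Perm (Fin (n + 1)) :=
  (w.map (adjTransposition n)).prod

/-- A word in the generators is reduced if no shorter word has the same product. -/
def ReducedA (n : ℕ) (w : List (Fin n)) : Prop :=
  ∀ w' : List (Fin n), wordProdA n w' = wordProdA n w → w.length ≤ w'.length

/-- An element is a boolean reflection if it admits a reduced expression of the form
`s_{j_1} ⋯ s_{j_{k-1}} s_{j_k} s_{j_{k-1}} ⋯ s_{j_1}` with `j_1, …, j_k` pairwise distinct. -/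
def IsBooleanReflectionA (n : ℕ) (t : Equiv.Perm (Fin (n + 1))) : Prop :=
  ∃ (l : List (Fin n)) (c : Fin n), (l ++ [c]).Nodup ∧
    ReducedA n (l ++ [c] ++ l.reverse) ∧ wordProdA n (l ++ [c] ++ l.reverse) = t

/-- A permutation is boolean if it is the product of some subsequence of a
boolean expression. -/
def IsBooleanA (n : ℕ) (π : Equiv.Perm (Fin (n + 1))) : Prop :=
  ∃ (l : List (Fin n)) (c : Fin n), (l ++ [c]).Nodup ∧
    ReducedA n (l ++ [c] ++ l.reverse) ∧
    ∃ w : List (Fin n), w.Sublist (l ++ [c] ++ l.reverse) ∧ wordProdA n w = π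

/-- The top boolean word `s_1 s_2 ⋯ s_{n-1} s_n s_{n-1} ⋯ s_2 s_1`. -/
def topWordA (n : ℕ) : List (Fin n) :=
  List.finRange n ++ ((List.finRange n).dropLast).reverse


open List Finset Pointwise

section SubwordProducts

variable {α β M : Type*} [Monoid M] (f : α → M)

def subwordProds (W : List α) : Set M := {m | ∃ w, w <+ W ∧ (w.map f).prod = m}

@[simp] lemma subwordProds_nil : subwordProds f [] = 1 := by
  ext m; simp [subwordProds, eq_comm]

lemma subwordProds_cons (x : α) (W : List α) :
    subwordProds f (x :: W) = {1, f x} * subwordProds f W := by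
  ext m
  simp only [subwordProds, sublist_cons_iff, Set.mem_mul, Set.mem_insert_iff,
    Set.mem_singleton_iff, Set.mem_ofPred_eq]
  constructor
  · rintro ⟨w, hw | ⟨r, rfl, hr⟩, rfl⟩
    · exact ⟨1, .inl rfl, _, ⟨w, hw, rfl⟩, one_mul _⟩
    · exact ⟨f x, .inr rfl, _, ⟨r, hr, rfl⟩, by simp⟩
  · rintro ⟨_, rfl | rfl, _, ⟨w, hw, rfl⟩, rfl⟩
    · exact ⟨w, .inl hw, (one_mul _).symm⟩
    · exact ⟨x :: w, .inr ⟨w, rfl, hw⟩, by simp⟩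

lemma subwordProds_append (U V : List α) :
    subwordProds f (U ++ V) = subwordProds f U * subwordProds f V := by
  induction U with
  | nil => simp
  | cons x U ih => rw [cons_append, subwordProds_cons, subwordProds_cons, ih, mul_assoc]

lemma subwordProds_wrap (x : α) (W : List α) :
    subwordProds f (x :: W ++ [x]) = {1, f x} * subwordProds f W * {1, f x} := by
  rw [subwordProds_append, subwordProds_cons, subwordProds_cons, subwordProds_nil, mul_one]

lemma subwordProds_map (g : β → α) (W : List β) :
    subwordProds f (W.map g) = subwordProds (f ∘ g) W := by
  ext m
  simp only [subwordProds, Set.mem_ofPred_eq, sublist_map_iff]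
  constructor
  · rintro ⟨_, ⟨w, hw, rfl⟩, rfl⟩
    exact ⟨w, hw, by simp⟩
  · rintro ⟨w, hw, rfl⟩
    exact ⟨_, ⟨w, hw, rfl⟩, by simp⟩

lemma subwordProds_mono {U V : List α} (h : U <+ V) : subwordProds f U ⊆ subwordProds f V :=
  fun _ ⟨w, hw, e⟩ => ⟨w, hw.trans h, e⟩

lemma pair_one_mul_pair_one_comm {x y : M} (h : Commute x y) :
    ({1, x} : Set M) * {1, y} = {1, y} * {1, x} := by
  simp only [Set.insert_eq, Set.union_mul, Set.mul_union, Set.singleton_mul_singleton, h.eq,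
    mul_one, one_mul]
  ext; simp; tauto

lemma pair_one_mul_braid {x y : M} (hx : x * x = 1) (hy : y * y = 1)
    (h : x * y * x = y * x * y) :
    ({1, x} : Set M) * {1, y} * {1, x} = {1, y} * {1, x} * {1, y} := by
  simp only [Set.insert_eq, Set.union_mul, Set.mul_union, Set.singleton_mul_singleton,
    mul_one, one_mul, hx, hy, h]
  ext; simp; tauto

end SubwordProducts

section Transpositions

/-- Indexed by naturals so that interval arithmetic stays in `ℕ`; `Fin.clamp` only matters for
indices beyond `n`, which never occur below. -/
def transposition (n a b : ℕ) : Equiv.Perm (Fin (n + 1)) :=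
  Equiv.swap (Fin.clamp a n) (Fin.clamp b n)

abbrev adjTranspositionNat (n j : ℕ) : Equiv.Perm (Fin (n + 1)) := transposition n j (j + 1)

variable {n : ℕ}

lemma clamp_swap_apply {j a : ℕ} (hj : j < n) (ha : a ≤ n) :
    Fin.clamp (Equiv.swap j (j + 1) a) n = adjTranspositionNat n j (Fin.clamp a n) := by
  simp only [transposition, Equiv.swap_apply_def, Fin.ext_iff]
  split_ifs <;> simp_all; omega

lemma adjTranspositionNat_conj {j a b : ℕ} (hj : j < n) (ha : a ≤ n) (hb : b ≤ n) :
    adjTranspositionNat n j * transposition n a b * adjTranspositionNat n j =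
      transposition n (Equiv.swap j (j + 1) a) (Equiv.swap j (j + 1) b) := by
  have h_inv : (adjTranspositionNat n j)⁻¹ = adjTranspositionNat n j := Equiv.swap_inv _ _
  rw [transposition, transposition, clamp_swap_apply hj ha, clamp_swap_apply hj hb,
    Equiv.swap_apply_apply, h_inv]

lemma adjTranspositionNat_conj_left {a b : ℕ} (hab : a + 1 < b) (hb : b ≤ n) :
    adjTranspositionNat n a * transposition n (a + 1) b * adjTranspositionNat n a =
      transposition n a b := by
  rw [adjTranspositionNat_conj (by omega) (by omega) hb, Equiv.swap_apply_right,
    Equiv.swap_apply_of_ne_of_ne (by omega) (by omega)]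

lemma adjTranspositionNat_conj_right {a b : ℕ} (hab : a < b) (hb : b < n) :
    adjTranspositionNat n b * transposition n a b * adjTranspositionNat n b =
      transposition n a (b + 1) := by
  rw [adjTranspositionNat_conj hb (by omega) hb.le, Equiv.swap_apply_left,
    Equiv.swap_apply_of_ne_of_ne (by omega) (by omega)]

lemma adjTranspositionNat_conj_of_disjoint {j a b : ℕ} (hj : j < n) (hab : a < b) (hb : b ≤ n)
    (h : j + 1 < a ∨ b < j) :
    adjTranspositionNat n j * transposition n a b * adjTranspositionNat n j =
      transposition n a b := by
  rw [adjTranspositionNat_conj hj (by omega) hb,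
    Equiv.swap_apply_of_ne_of_ne (by omega) (by omega),
    Equiv.swap_apply_of_ne_of_ne (by omega) (by omega)]

lemma adjTranspositionNat_mul_self (j : ℕ) :
    adjTranspositionNat n j * adjTranspositionNat n j = 1 :=
  Equiv.swap_mul_self _ _

lemma adjTranspositionNat_braid {i : ℕ} (hi : i + 1 < n) :
    adjTranspositionNat n i * adjTranspositionNat n (i + 1) * adjTranspositionNat n i =
      adjTranspositionNat n (i + 1) * adjTranspositionNat n i * adjTranspositionNat n (i + 1) := by
  rw [adjTranspositionNat_conj_left (by omega) (by omega),
    adjTranspositionNat_conj_right (by omega) hi]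

lemma commute_adjTranspositionNat {i j : ℕ} (hij : i + 1 < j) (hj : j < n) :
    Commute (adjTranspositionNat n i) (adjTranspositionNat n j) := by
  have h : adjTranspositionNat n i * adjTranspositionNat n j * adjTranspositionNat n i =
      adjTranspositionNat n j :=
    adjTranspositionNat_conj_of_disjoint (by omega) (by omega) (by omega) (.inl hij)
  calc adjTranspositionNat n i * adjTranspositionNat n j
      = adjTranspositionNat n i * adjTranspositionNat n j * adjTranspositionNat n i *
          adjTranspositionNat n i := by
        rw [mul_assoc _ (adjTranspositionNat n i), adjTranspositionNat_mul_self, mul_one]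
    _ = _ := by rw [h]

end Transpositions

section Inversions

lemma CovBy.eq_of_swap_lt_swap {α : Type*} [LinearOrder α] {x y p q : α} (hxy : x ⋖ y)
    (hpq : p < q) (h : Equiv.swap x y q < Equiv.swap x y p) : p = x ∧ q = y := by
  simp only [Equiv.swap_apply_def] at h
  have := hxy.1
  split_ifs at h <;> subst_vars <;>
    first | exact ⟨rfl, rfl⟩ | (exfalso; first | order | exact hxy.2 h hpq | exact hxy.2 hpq h)

variable {α : Type*} [Fintype α] [LinearOrder α]

def inversions (σ : Equiv.Perm α) : Finset (α × α) := {p | p.1 < p.2 ∧ σ p.2 < σ p.1}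

@[simp] lemma mem_inversions {σ : Equiv.Perm α} {p : α × α} :
    p ∈ inversions σ ↔ p.1 < p.2 ∧ σ p.2 < σ p.1 := by
  simp [inversions]

lemma card_inversions_swap_mul_le {x y : α} (hxy : x ⋖ y) (σ : Equiv.Perm α) :
    #(inversions (Equiv.swap x y * σ)) ≤ #(inversions σ) + 1 := by
  calc #(inversions (Equiv.swap x y * σ))
      ≤ #(insert (σ.symm x, σ.symm y) (inversions σ)) := by
        refine card_le_card fun p hp => ?_
        simp only [mem_inversions, mem_insert, Equiv.Perm.mul_apply] at hp ⊢
        rcases lt_or_gt_of_ne (σ.injective.ne hp.1.ne') with h | h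
        · exact .inr ⟨hp.1, h⟩
        · obtain ⟨rfl, rfl⟩ := hxy.eq_of_swap_lt_swap h hp.2
          left; ext <;> simp
    _ ≤ _ := card_insert_le _ _

lemma card_inversions_swap_bot_top [BoundedOrder α] :
    2 * Fintype.card α - 3 ≤ #(inversions (Equiv.swap (⊥ : α) ⊤)) := by
  set τ := Equiv.swap (⊥ : α) ⊤
  have hτ_top {z : α} : τ z = ⊤ ↔ z = ⊥ := by simp [τ, Equiv.swap_apply_eq_iff]
  have hτ_bot {z : α} : τ z = ⊥ ↔ z = ⊤ := by simp [τ, Equiv.swap_apply_eq_iff]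
  set S := (univ.erase (⊥ : α)).image fun y : α => ((⊥ : α), y)
  set T := (univ.erase (⊤ : α)).image fun x : α => (x, (⊤ : α))
  have hS : S ⊆ inversions τ := by
    simp only [S, subset_iff, mem_image, mem_erase, mem_inversions]
    rintro _ ⟨y, ⟨hy, -⟩, rfl⟩
    exact ⟨bot_lt_iff_ne_bot.2 hy, by simpa [τ] using lt_top_iff_ne_top.2 (hτ_top.not.2 hy)⟩
  have hT : T ⊆ inversions τ := by
    simp only [T, subset_iff, mem_image, mem_erase, mem_inversions]
    rintro _ ⟨x, ⟨hx, -⟩, rfl⟩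
    exact ⟨lt_top_iff_ne_top.2 hx, by simpa [τ] using bot_lt_iff_ne_bot.2 (hτ_bot.not.2 hx)⟩
  have hST : #(S ∩ T) ≤ 1 := by
    refine card_le_one.2 ?_
    simp only [S, T, mem_inter, mem_image]
    rintro _ ⟨⟨_, -, rfl⟩, ⟨_, -, h₁⟩⟩ _ ⟨⟨_, -, rfl⟩, ⟨_, -, h₂⟩⟩
    simp_all [Prod.ext_iff]
  have hcardS : #S = Fintype.card α - 1 := by
    rw [card_image_of_injective _ (Prod.mk_right_injective ⊥), card_erase_of_mem (mem_univ _),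
      card_univ]
  have hcardT : #T = Fintype.card α - 1 := by
    rw [card_image_of_injective _ (Prod.mk_left_injective ⊤), card_erase_of_mem (mem_univ _),
      card_univ]
  have := card_union_add_card_inter S T
  have := card_le_card (union_subset hS hT)
  omega

end Inversions

section IntervalWords

variable {n : ℕ}

/-- `s_a s_{a+1} ⋯ s_{b-1} ⋯ s_{a+1} s_a`, with `s_j` written as `j`. -/
def transpositionWord (a b : ℕ) : List ℕ :=
  range' a (b - a) ++ (range' a (b - a - 1)).reverse

lemma transpositionWord_add_one (a : ℕ) : transpositionWord a (a + 1) = [a] := by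
  simp [transpositionWord]

lemma transpositionWord_of_add_one_lt {a b : ℕ} (h : a + 1 < b) :
    transpositionWord a b = a :: transpositionWord (a + 1) b ++ [a] := by
  obtain ⟨k, rfl⟩ : ∃ k, b = a + k + 2 := ⟨b - a - 2, by omega⟩
  simp only [transpositionWord, show a + k + 2 - a = k + 2 by omega,
    show a + k + 2 - (a + 1) = k + 1 by omega]
  simp [range'_succ]

lemma range'_sublist_range'_zero {a k m : ℕ} (h : a + k ≤ m) : range' a k <+ range' 0 m := by
  rw [← Nat.add_sub_cancel' (h.trans' (Nat.le_add_right a k)), ← range'_append_1, zero_add]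
  exact sublist_append_of_sublist_right (range'_sublist_right.2 (by omega))

lemma transpositionWord_sublist {a b m : ℕ} (hab : a < b) (hb : b ≤ m) :
    transpositionWord a b <+ transpositionWord 0 m :=
  (range'_sublist_range'_zero (by omega)).append
    (reverse_sublist.2 (range'_sublist_range'_zero (by omega)))

/-- Boolean words grown from `[c]` by wrapping with a letter adjacent to the interval `[a, b)` of
letters used so far. -/
inductive IsIntervalWord : ℕ → ℕ → List ℕ → Prop
  | single (c : ℕ) : IsIntervalWord c (c + 1) [c]
  | wrap_left {a b : ℕ} {w : List ℕ} :
      IsIntervalWord (a + 1) b w → IsIntervalWord a b (a :: w ++ [a])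
  | wrap_right {a b : ℕ} {w : List ℕ} :
      IsIntervalWord a b w → IsIntervalWord a (b + 1) (b :: w ++ [b])

namespace IsIntervalWord

variable {a b : ℕ} {W : List ℕ}

lemma lt (h : IsIntervalWord a b W) : a < b := by
  induction h <;> omega

lemma mem (h : IsIntervalWord a b W) {x : ℕ} (hax : a ≤ x) (hxb : x < b) : x ∈ W := by
  induction h with
  | single c => simp; omega
  | @wrap_left a b w _ ih =>
    rcases hax.eq_or_lt with rfl | hax
    · simp
    · simp [ih hax hxb]
  | @wrap_right a b w _ ih =>
    rcases (Nat.lt_succ_iff.1 hxb).eq_or_lt with rfl | hxb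
    · simp
    · simp [ih hax hxb]

lemma prod_eq (h : IsIntervalWord a b W) (hb : b ≤ n) :
    (W.map (adjTranspositionNat n)).prod = transposition n a b := by
  induction h with
  | single c => simp
  | @wrap_left a b w hw ih =>
    simp [ih hb, ← mul_assoc, adjTranspositionNat_conj_left hw.lt hb]
  | @wrap_right a b w hw ih =>
    have hb' : b < n := hb
    simp [ih hb'.le, ← mul_assoc, adjTranspositionNat_conj_right hw.lt hb']

end IsIntervalWord

lemma isIntervalWord_transpositionWord {a b : ℕ} (h : a < b) :
    IsIntervalWord a b (transpositionWord a b) := by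
  obtain ⟨k, rfl⟩ := Nat.exists_eq_add_of_lt h
  clear h
  induction k generalizing a with
  | zero => simpa [transpositionWord_add_one] using IsIntervalWord.single a
  | succ k ih =>
    rw [show a + (k + 1) + 1 = a + 1 + k + 1 by omega, transpositionWord_of_add_one_lt (by omega)]
    exact (ih (a := a + 1)).wrap_left

lemma subwordProds_wrap_transpositionWord_subset {a b : ℕ} (hab : a < b) (hb : b < n) :
    subwordProds (adjTranspositionNat n) (b :: transpositionWord a b ++ [b]) ⊆
      subwordProds (adjTranspositionNat n) (transpositionWord a (b + 1)) := by
  obtain ⟨k, hk⟩ := Nat.exists_eq_add_of_lt hab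
  clear hab
  induction k generalizing a with
  | zero =>
    subst hk
    rw [transpositionWord_add_one, transpositionWord_of_add_one_lt (by omega),
      transpositionWord_add_one]
    simp only [subwordProds_wrap, subwordProds_cons, subwordProds_nil, mul_one]
    rw [pair_one_mul_braid (adjTranspositionNat_mul_self _) (adjTranspositionNat_mul_self _)
      (adjTranspositionNat_braid hb).symm]
  | succ k ih =>
    set S : ℕ → Set (Equiv.Perm (Fin (n + 1))) := fun j => {1, adjTranspositionNat n j}
    have hc : S a * S b = S b * S a :=
      pair_one_mul_pair_one_comm (commute_adjTranspositionNat (by omega) hb)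
    set X := subwordProds (adjTranspositionNat n) (transpositionWord (a + 1) b)
    rw [transpositionWord_of_add_one_lt (a := a) (by omega),
      transpositionWord_of_add_one_lt (a := a) (by omega),
      subwordProds_wrap, subwordProds_wrap, subwordProds_wrap]
    calc S b * (S a * X * S a) * S b = S a * (S b * X * S b) * S a := by
          simp only [← mul_assoc]; rw [← hc]; simp only [mul_assoc]; rw [hc]
      _ ⊆ _ := by
        gcongr
        rw [← subwordProds_wrap]
        exact ih (by omega)

lemma IsIntervalWord.subwordProds_subset {a b : ℕ} {W : List ℕ} (h : IsIntervalWord a b W)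
    (hb : b ≤ n) :
    subwordProds (adjTranspositionNat n) W ⊆
      subwordProds (adjTranspositionNat n) (transpositionWord a b) := by
  induction h with
  | single c => rw [transpositionWord_add_one]
  | @wrap_left a b w hw ih =>
    rw [transpositionWord_of_add_one_lt hw.lt, subwordProds_wrap, subwordProds_wrap]
    gcongr
    exact ih hb
  | @wrap_right a b w hw ih =>
    calc subwordProds (adjTranspositionNat n) (b :: w ++ [b])
        ⊆ subwordProds (adjTranspositionNat n) (b :: transpositionWord a b ++ [b]) := by
          rw [subwordProds_wrap, subwordProds_wrap]
          gcongr
          exact ih (by omega)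
      _ ⊆ _ := subwordProds_wrap_transpositionWord_subset hw.lt hb

end IntervalWords

section BooleanExpressions

variable {n : ℕ}

lemma adjTranspositionNat_val (i : Fin n) : adjTranspositionNat n i = adjTransposition n i := by
  simp only [transposition, adjTransposition]
  congr 1 <;> ext <;> simp

lemma subwordProds_adjTransposition (W : List (Fin n)) :
    subwordProds (adjTransposition n) W =
      subwordProds (adjTranspositionNat n) (W.map Fin.val) := by
  rw [subwordProds_map]
  congr 1
  exact funext fun i => (adjTranspositionNat_val i).symm

lemma wordProdA_eq_prod_map_val (W : List (Fin n)) :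
    wordProdA n W = ((W.map Fin.val).map (adjTranspositionNat n)).prod := by
  simp [wordProdA, Function.comp_def, adjTranspositionNat_val]

lemma wordProdA_wrap (j : Fin n) (W : List (Fin n)) :
    wordProdA n (j :: W ++ [j]) = adjTransposition n j * wordProdA n W * adjTransposition n j := by
  simp [wordProdA, mul_assoc]

lemma ReducedA.of_wrap {j : Fin n} {W : List (Fin n)} (h : ReducedA n (j :: W ++ [j])) :
    ReducedA n W := by
  intro W' hW'
  have := h (j :: W' ++ [j]) (by rw [wordProdA_wrap, wordProdA_wrap, hW'])
  simp only [length_append, length_cons] at this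
  omega

lemma ReducedA.wordProdA_wrap_ne {j : Fin n} {W : List (Fin n)}
    (h : ReducedA n (j :: W ++ [j])) : wordProdA n (j :: W ++ [j]) ≠ wordProdA n W := by
  intro hW
  have := h W hW.symm
  simp only [length_append, length_cons] at this
  omega

lemma isIntervalWord_of_reducedA (l : List (Fin n)) (c : Fin n) (hnd : (l ++ [c]).Nodup)
    (hred : ReducedA n (l ++ [c] ++ l.reverse)) :
    ∃ a b, b ≤ n ∧ IsIntervalWord a b ((l ++ [c] ++ l.reverse).map Fin.val) := by
  induction l with
  | nil => exact ⟨c, c + 1, c.isLt, .single c⟩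
  | cons j l ih =>
    rw [show j :: l ++ [c] ++ (j :: l).reverse = j :: (l ++ [c] ++ l.reverse) ++ [j] by simp]
      at hred ⊢
    rw [cons_append, nodup_cons] at hnd
    obtain ⟨a, b, hb, hW⟩ := ih hnd.2 hred.of_wrap
    rw [List.map_append, List.map_cons, List.map_singleton]
    obtain h | h | h | h :
        j + 1 = a ∨ j = b ∨ (a ≤ j ∧ j < b) ∨ (j + 1 < a ∨ b < j) := by omega
    · subst h
      exact ⟨j, b, hb, hW.wrap_left⟩
    · exact ⟨a, j + 1, j.isLt, h ▸ hW.wrap_right⟩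
    · refine absurd (hW.mem h.1 h.2) ?_
      have hj : j ∉ l ∧ j ≠ c := by simpa using hnd.1
      simp [Fin.val_inj, hj]
    · refine absurd ?_ hred.wordProdA_wrap_ne
      rw [wordProdA_wrap, ← adjTranspositionNat_val, wordProdA_eq_prod_map_val, hW.prod_eq hb,
        adjTranspositionNat_conj_of_disjoint j.isLt hW.lt hb h]

lemma topWordA_map_val (n : ℕ) : (topWordA n).map Fin.val = transpositionWord 0 n := by
  cases n with
  | zero => rfl
  | succ n => simp [topWordA, transpositionWord, map_dropLast, range_eq_range', range'_1_concat]

lemma wordProdA_topWordA (hn : 1 ≤ n) : wordProdA n (topWordA n) = Equiv.swap ⊥ ⊤ := by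
  rw [wordProdA_eq_prod_map_val, topWordA_map_val,
    (isIntervalWord_transpositionWord hn).prod_eq le_rfl, transposition]
  congr
  ext
  simp

lemma card_inversions_wordProdA_le (W : List (Fin n)) :
    #(inversions (wordProdA n W)) ≤ W.length := by
  induction W with
  | nil => simpa [wordProdA, inversions] using fun _ _ => le_of_lt
  | cons i W ih =>
    have hi : i.castSucc ⋖ i.succ :=
      ⟨Fin.castSucc_lt_succ, fun _ h₁ h₂ => by
        rw [Fin.lt_def] at h₁ h₂; simp at h₁ h₂; omega⟩
    have := card_inversions_swap_mul_le hi (wordProdA n W)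
    simp only [wordProdA, List.map_cons, List.prod_cons, length_cons] at this ih ⊢
    exact this.trans (by omega)

lemma reducedA_topWordA (hn : 1 ≤ n) : ReducedA n (topWordA n) := by
  intro W hW
  have hlen : (topWordA n).length = 2 * n - 1 := by simp [topWordA]; omega
  have hτ := card_inversions_swap_bot_top (α := Fin (n + 1))
  have hW' := card_inversions_wordProdA_le W
  rw [Fintype.card_fin] at hτ
  rw [hW, wordProdA_topWordA hn] at hW'
  omega

end BooleanExpressions

theorem stmt2 (n : ℕ) (hn : 1 ≤ n) (π : Equiv.Perm (Fin (n + 1))) :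
    IsBooleanA n π ↔ ∃ w : List (Fin n), w.Sublist (topWordA n) ∧ wordProdA n w = π := by
  change _ ↔ π ∈ subwordProds (adjTransposition n) (topWordA n)
  constructor
  · rintro ⟨l, c, hnd, hred, hπ⟩
    obtain ⟨a, b, hb, hW⟩ := isIntervalWord_of_reducedA l c hnd hred
    change π ∈ subwordProds (adjTransposition n) _ at hπ
    rw [subwordProds_adjTransposition] at hπ ⊢
    rw [topWordA_map_val]
    exact subwordProds_mono _ (transpositionWord_sublist hW.lt hb) (hW.subwordProds_subset hb hπ)
  · intro hπ
    have hne : finRange n ≠ [] := by simpa using Nat.one_le_iff_ne_zero.1 hn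
    set l := (finRange n).dropLast
    set c := (finRange n).getLast hne
    have htop : topWordA n = l ++ [c] ++ l.reverse := by
      rw [topWordA, dropLast_append_getLast]
    refine ⟨l, c, ?_, htop ▸ reducedA_topWordA hn, htop ▸ hπ⟩
    rw [dropLast_append_getLast]
    exact nodup_finRange n
end

section
/- Let π ∈ S_{n+1} be boolean and let w be any reduced expression of π that is a subsequence of the word (s_1, …, s_{n−1}, s_n, s_{n−1}, …, s_1). Then for each 1 ≤ i ≤ n: the generator s_i occurs 0 times in w if and only if π({1,…,i}) = {1,…,i}; and s_i occurs exactly 2 times in w if and only if π(i+1) = i+1 and π({1,…,i}) ≠ {1,…,i}. -/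
/-!
Write `w = w₁ ++ w₂` along the two halves of the top word: `w₁` is increasing, `w₂` decreasing, so
each letter occurs at most once in each half (letters are 0-indexed, `g` standing for `s_{g+1}`).
Every letter other than `g` maps `{0, …, g}` onto itself, so if `g` does not occur then `π`
stabilizes this prefix. An increasing word containing `g` sends `g ↦ g + 1` and a decreasing one
sends `g + 1 ↦ g`; this decides whether `π` fixes `g + 1`. If `g` occurs once, writing
`w = a ++ g :: b`, the point `b⁻¹ g ≤ g` is sent above `g`. If `g` occurs twice, `π` fixes `g + 1`;
by reducedness `g + 1` must occur too, since otherwise both copies of `s_g` commute past everything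
between them, and a downward induction on `g` shows that `π` does not stabilize `{0, …, g}`.
-/

section

variable {n : ℕ}

/-- In the paper's 1-indexed notation: `π({1, …, k+1}) = {1, …, k+1}`. -/
def StabilizesPrefix (π : Equiv.Perm (Fin (n + 1))) (k : ℕ) : Prop :=
  ∀ x : Fin (n + 1), x.val ≤ k → (π x).val ≤ k

theorem Finset.image_univ_filter_eq_iff {α : Type*} [Fintype α] [DecidableEq α]
    (π : Equiv.Perm α) (p : α → Prop) [DecidablePred p] :
    (univ.filter p).image π = univ.filter p ↔ ∀ x, p x → p (π x) := by
  constructor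
  · intro h x hx
    have hmem : π x ∈ (univ.filter p).image π := mem_image_of_mem _ (by simpa using hx)
    simpa [h] using hmem
  · intro h
    refine eq_of_subset_of_card_le (image_subset_iff.2 fun x hx => ?_) ?_
    · simpa using h x (by simpa using hx)
    · rw [card_image_of_injective _ π.injective]

@[simp]
theorem wordProdA_cons (i : Fin n) (l : List (Fin n)) :
    wordProdA n (i :: l) = adjTransposition n i * wordProdA n l := by
  simp [wordProdA]

@[simp]
theorem wordProdA_append (l₁ l₂ : List (Fin n)) :
    wordProdA n (l₁ ++ l₂) = wordProdA n l₁ * wordProdA n l₂ := by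
  simp [wordProdA]

theorem wordProdA_reverse (l : List (Fin n)) :
    wordProdA n l.reverse = (wordProdA n l)⁻¹ := by
  have hinv (i : Fin n) : (adjTransposition n i)⁻¹ = adjTransposition n i := Equiv.swap_inv _ _
  simp [wordProdA, List.prod_inv_reverse, Function.comp_def, hinv]

theorem adjTransposition_apply_of_ne {i : Fin n} {x : Fin (n + 1)} (h₁ : x.val ≠ i.val)
    (h₂ : x.val ≠ i.val + 1) : adjTransposition n i x = x :=
  Equiv.swap_apply_of_ne_of_ne (fun h => h₁ (by simp [h])) (fun h => h₂ (by simp [h]))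

theorem adjTransposition_commute {i j : Fin n} (h : i.val + 2 ≤ j.val) :
    Commute (adjTransposition n i) (adjTransposition n j) :=
  (Equiv.Perm.disjoint_swap_swap (by simp [Fin.ext_iff]; omega)).commute

theorem adjTransposition_val_le_iff {i g : Fin n} (h : i ≠ g) (x : Fin (n + 1)) :
    (adjTransposition n i x).val ≤ g.val ↔ x.val ≤ g.val := by
  have h' : i.val ≠ g.val := Fin.val_ne_of_ne h
  unfold adjTransposition
  rw [Equiv.swap_apply_def]
  split_ifs <;> simp_all [Fin.ext_iff] <;> omega

theorem wordProdA_apply_of_forall {l : List (Fin n)} {x : Fin (n + 1)}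
    (h : ∀ i ∈ l, adjTransposition n i x = x) : wordProdA n l x = x := by
  induction l with
  | nil => rfl
  | cons i l ih =>
    simp only [List.forall_mem_cons] at h
    simp [ih h.2, h.1]

theorem wordProdA_val_le_iff {l : List (Fin n)} {g : Fin n} (hg : g ∉ l) (x : Fin (n + 1)) :
    (wordProdA n l x).val ≤ g.val ↔ x.val ≤ g.val := by
  induction l with
  | nil => rfl
  | cons i l ih =>
    simp only [List.mem_cons, not_or] at hg
    simp [adjTransposition_val_le_iff (Ne.symm hg.1), ih hg.2]

theorem stabilizesPrefix_wordProdA {l : List (Fin n)} {g : Fin n} (hg : g ∉ l) :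
    StabilizesPrefix (wordProdA n l) g.val :=
  fun x => (wordProdA_val_le_iff hg x).2

theorem not_stabilizesPrefix_of_count_eq_one {l : List (Fin n)} {g : Fin n} (h : l.count g = 1) :
    ¬ StabilizesPrefix (wordProdA n l) g.val := by
  obtain ⟨a, b, rfl⟩ := List.append_of_mem (List.count_pos_iff.1 (by rw [h]; exact one_pos))
  have hab : g ∉ a ∧ g ∉ b := by
    simp only [List.count_append, List.count_cons_self] at h
    exact ⟨List.count_eq_zero.1 (by omega), List.count_eq_zero.1 (by omega)⟩
  intro hstab
  have hx := hstab ((wordProdA n b)⁻¹ g.castSucc)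
    ((wordProdA_val_le_iff hab.2 _).1 (by simp))
  simp [wordProdA_val_le_iff hab.1, adjTransposition] at hx

theorem not_reducedA_of_commute (X Y Z : List (Fin n)) (j : Fin n)
    (hY : ∀ e ∈ Y, Commute (adjTransposition n j) (adjTransposition n e)) :
    ¬ ReducedA n (X ++ j :: (Y ++ j :: Z)) := by
  have hcomm : Commute (adjTransposition n j) (wordProdA n Y) :=
    Commute.list_prod_right _ _ (by simpa using hY)
  have hprod : wordProdA n (X ++ (Y ++ Z)) = wordProdA n (X ++ j :: (Y ++ j :: Z)) := by
    simp only [wordProdA_append, wordProdA_cons, ← mul_assoc, hcomm.eq]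
    simp [mul_assoc, adjTransposition]
  intro hred
  have := hred _ hprod
  simp at this

theorem wordProdA_apply_castSucc_of_pairwise_lt {l : List (Fin n)} (hl : l.Pairwise (· < ·))
    {g : Fin n} (hg : g ∈ l) : wordProdA n l g.castSucc = g.succ := by
  obtain ⟨a, b, rfl⟩ := List.append_of_mem hg
  obtain ⟨-, hb, hab⟩ := List.pairwise_append.1 hl
  have hb : wordProdA n b g.castSucc = g.castSucc := wordProdA_apply_of_forall fun i hi => by
    have := Fin.lt_def.1 ((List.pairwise_cons.1 hb).1 i hi)
    exact adjTransposition_apply_of_ne (by simp; omega) (by simp; omega)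
  have ha : wordProdA n a g.succ = g.succ := wordProdA_apply_of_forall fun i hi => by
    have := Fin.lt_def.1 (hab i hi g List.mem_cons_self)
    exact adjTransposition_apply_of_ne (by simp; omega) (by simp; omega)
  simp [hb, ha, adjTransposition]

theorem wordProdA_apply_succ_of_pairwise_gt {l : List (Fin n)} (hl : l.Pairwise (· > ·))
    {g : Fin n} (hg : g ∈ l) : wordProdA n l g.succ = g.castSucc := by
  have h := wordProdA_apply_castSucc_of_pairwise_lt (List.pairwise_reverse.2 hl)
    (List.mem_reverse.2 hg)
  rw [wordProdA_reverse, Equiv.Perm.inv_eq_iff_eq] at h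
  exact h.symm

theorem wordProdA_append_apply_succ_eq_self_iff {w₁ w₂ : List (Fin n)}
    (h₁ : w₁.Pairwise (· < ·)) (h₂ : w₂.Pairwise (· > ·)) {g : Fin n} (hg : g ∈ w₁ ++ w₂) :
    wordProdA n (w₁ ++ w₂) g.succ = g.succ ↔ g ∈ w₁ ∧ g ∈ w₂ := by
  rw [wordProdA_append, Equiv.Perm.mul_apply]
  by_cases hg₂ : g ∈ w₂
  · rw [wordProdA_apply_succ_of_pairwise_gt h₂ hg₂]
    by_cases hg₁ : g ∈ w₁
    · simp [hg₁, hg₂, wordProdA_apply_castSucc_of_pairwise_lt h₁ hg₁]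
    · have := (wordProdA_val_le_iff hg₁ g.castSucc).2 (by simp)
      simp only [hg₁, false_and, iff_false]
      intro h
      simp [h] at this
  · have hg₁ : g ∈ w₁ := by simpa [hg₂] using hg
    have := (wordProdA_val_le_iff hg₂ g.succ).not.2 (by simp)
    simp only [hg₂, and_false, iff_false]
    intro h
    have hQ : wordProdA n w₂ g.succ = g.castSucc :=
      (wordProdA n w₁).injective (h.trans (wordProdA_apply_castSucc_of_pairwise_lt h₁ hg₁).symm)
    simp [hQ] at this

theorem count_append_eq_two_iff {w₁ w₂ : List (Fin n)} (h₁ : w₁.Nodup) (h₂ : w₂.Nodup)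
    (g : Fin n) : (w₁ ++ w₂).count g = 2 ↔ g ∈ w₁ ∧ g ∈ w₂ := by
  have c₁ := List.nodup_iff_count_le_one.1 h₁ g
  have c₂ := List.nodup_iff_count_le_one.1 h₂ g
  rw [List.count_append, ← List.count_pos_iff, ← List.count_pos_iff]
  omega

theorem count_append_eq_one {w₁ w₂ : List (Fin n)} (h₁ : w₁.Nodup) (h₂ : w₂.Nodup)
    {g : Fin n} (hg : g ∈ w₁ ++ w₂) (hboth : ¬(g ∈ w₁ ∧ g ∈ w₂)) : (w₁ ++ w₂).count g = 1 := by
  have c₁ := List.nodup_iff_count_le_one.1 h₁ g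
  have c₂ := List.nodup_iff_count_le_one.1 h₂ g
  rw [List.mem_append, ← List.count_pos_iff, ← List.count_pos_iff] at hg
  rw [← List.count_pos_iff, ← List.count_pos_iff] at hboth
  rw [List.count_append]
  omega

theorem not_stabilizesPrefix_of_mem {w₁ w₂ : List (Fin n)}
    (h₁ : w₁.Pairwise (· < ·)) (h₂ : w₂.Pairwise (· > ·)) (hred : ReducedA n (w₁ ++ w₂))
    (g : Fin n) (hg : g ∈ w₁ ++ w₂) : ¬ StabilizesPrefix (wordProdA n (w₁ ++ w₂)) g.val := by
  intro hstab
  by_cases hboth : g ∈ w₁ ∧ g ∈ w₂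
  swap
  · exact not_stabilizesPrefix_of_count_eq_one
      (count_append_eq_one h₁.nodup h₂.nodup hg hboth) hstab
  have hfix := (wordProdA_append_apply_succ_eq_self_iff h₁ h₂ hg).2 hboth
  by_cases hnext : ∃ j ∈ w₁ ++ w₂, j.val = g.val + 1
  · obtain ⟨j, hj, hjg⟩ := hnext
    refine not_stabilizesPrefix_of_mem h₁ h₂ hred j hj fun x hx => ?_
    rcases Nat.lt_or_ge g.val x.val with hgx | hxg
    · have hx : x = g.succ := Fin.ext (by simp; omega)
      rw [hx, hfix, Fin.val_succ, hjg]
    · have := hstab x hxg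
      omega
  · obtain ⟨a, b, rfl⟩ := List.append_of_mem hboth.1
    obtain ⟨c, e, rfl⟩ := List.append_of_mem hboth.2
    have hb : ∀ k ∈ b, g < k := (List.pairwise_cons.1 (List.pairwise_append.1 h₁).2.1).1
    have hc : ∀ k ∈ c, g < k := fun k hk => (List.pairwise_append.1 h₂).2.2 k hk g
      List.mem_cons_self
    refine not_reducedA_of_commute a (b ++ c) e g (fun k hk => ?_) (by simpa using hred)
    apply adjTransposition_commute
    have hgk : g.val < k.val := by
      rcases List.mem_append.1 hk with hk | hk
      exacts [hb k hk, hc k hk]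
    have hk' : k.val ≠ g.val + 1 := fun h => hnext ⟨k, by simp at hk ⊢; tauto, h⟩
    omega
termination_by n - g.val
decreasing_by omega

end

theorem stmt4_general (n : ℕ) (π : Equiv.Perm (Fin (n + 1)))
    (w : List (Fin n)) (hsub : w.Sublist (topWordA n)) (hred : ReducedA n w)
    (hprod : wordProdA n w = π) (g : Fin n) :
    (w.count g = 0 ↔
      (Finset.univ.filter (fun x : Fin (n + 1) => x.val ≤ g.val)).image (fun x => π x) =
        Finset.univ.filter (fun x : Fin (n + 1) => x.val ≤ g.val)) ∧
    (w.count g = 2 ↔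
      (π g.succ = g.succ ∧
        (Finset.univ.filter (fun x : Fin (n + 1) => x.val ≤ g.val)).image (fun x => π x) ≠
          Finset.univ.filter (fun x : Fin (n + 1) => x.val ≤ g.val))) := by
  subst hprod
  obtain ⟨w₁, w₂, rfl, hw₁, hw₂⟩ := List.sublist_append_iff.1 hsub
  have h₁ : w₁.Pairwise (· < ·) := (List.pairwise_lt_finRange n).sublist hw₁
  have h₂ : w₂.Pairwise (· > ·) := (List.pairwise_reverse.2 <|
    (List.pairwise_lt_finRange n).sublist (List.dropLast_sublist _)).sublist hw₂
  have hstab : StabilizesPrefix (wordProdA n (w₁ ++ w₂)) g.val ↔ g ∉ w₁ ++ w₂ :=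
    ⟨fun h hg => not_stabilizesPrefix_of_mem h₁ h₂ hred g hg h, stabilizesPrefix_wordProdA⟩
  simp only [ne_eq, Finset.image_univ_filter_eq_iff, List.count_eq_zero,
    count_append_eq_two_iff h₁.nodup h₂.nodup]
  refine ⟨hstab.symm, ⟨fun hboth => ⟨?_, ?_⟩, fun ⟨hfix, hg⟩ => ?_⟩⟩
  · exact (wordProdA_append_apply_succ_eq_self_iff h₁ h₂ (List.mem_append_left _ hboth.1)).2 hboth
  · exact fun h => hstab.1 h (List.mem_append_left _ hboth.1)
  · exact (wordProdA_append_apply_succ_eq_self_iff h₁ h₂ (not_imp_comm.1 hstab.2 hg)).1 hfix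

theorem stmt4 (n : ℕ) (hn : 1 ≤ n) (π : Equiv.Perm (Fin (n + 1)))
    (hbool : IsBooleanA n π)
    (w : List (Fin n)) (hsub : w.Sublist (topWordA n)) (hred : ReducedA n w)
    (hprod : wordProdA n w = π) (g : Fin n) :
    (w.count g = 0 ↔
      (Finset.univ.filter (fun x : Fin (n + 1) => x.val ≤ g.val)).image (fun x => π x) =
        Finset.univ.filter (fun x : Fin (n + 1) => x.val ≤ g.val)) ∧
    (w.count g = 2 ↔
      (π g.succ = g.succ ∧
        (Finset.univ.filter (fun x : Fin (n + 1) => x.val ≤ g.val)).image (fun x => π x) ≠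
          Finset.univ.filter (fun x : Fin (n + 1) => x.val ≤ g.val))) :=
  stmt4_general n π w hsub hred hprod g
end

section
/- In B_n (n ≥ 2), the words s_0·s_1·⋯·s_{n−2}·s_{n−1}·s_{n−2}·⋯·s_1·s_0 and s_{n−1}·s_{n−2}·⋯·s_1·s_0·s_1·⋯·s_{n−2}·s_{n−1} are reduced (their common length 2n−1 is minimal among words in the generators with the same product); their products t_1 and t_2 are distinct boolean reflections; and every boolean reflection of B_n of length 2n−1 equals t_1 or t_2. -/
/-- The Coxeter generators of the hyperoctahedral group `B_n`, realized as permutations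
of `ℤ`: `s_0` exchanges `1` and `-1`; for `1 ≤ i ≤ n-1`, `s_i` exchanges `i` with `i+1`
and `-i` with `-(i+1)`. -/
def genB (n : ℕ) (i : Fin n) : Equiv.Perm ℤ :=
  if i.val = 0 then Equiv.swap 1 (-1)
  else Equiv.swap (i.val : ℤ) ((i.val : ℤ) + 1) * Equiv.swap (-(i.val : ℤ)) (-((i.val : ℤ) + 1))

/-- The product of a word in the generators of `B_n`. -/
def wordProdB (n : ℕ) (w : List (Fin n)) : Equiv.Perm ℤ :=
  (w.map (genB n)).prod

/-- A word in the generators is reduced if no shorter word has the same product. -/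
def ReducedB (n : ℕ) (w : List (Fin n)) : Prop :=
  ∀ w' : List (Fin n), wordProdB n w' = wordProdB n w → w.length ≤ w'.length

/-- A reflection of `B_n`: a conjugate (by an element of the group) of a generator. -/
def IsReflectionB (n : ℕ) (t : Equiv.Perm ℤ) : Prop :=
  ∃ (v : List (Fin n)) (g : Fin n), t = wordProdB n v * genB n g * (wordProdB n v)⁻¹

/-- A boolean reflection of `B_n`: a reflection admitting a reduced expression of the form
`s_{j_1} ⋯ s_{j_{k-1}} s_{j_k} s_{j_{k-1}} ⋯ s_{j_1}` with `j_1, …, j_k` pairwise distinct. -/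
def IsBooleanReflectionB (n : ℕ) (t : Equiv.Perm ℤ) : Prop :=
  IsReflectionB n t ∧
    ∃ (l : List (Fin n)) (c : Fin n), (l ++ [c]).Nodup ∧
      ReducedB n (l ++ [c] ++ l.reverse) ∧ wordProdB n (l ++ [c] ++ l.reverse) = t

/-- The word `s_0 s_1 ⋯ s_{n-2} s_{n-1} s_{n-2} ⋯ s_1 s_0`. -/
def wordOneB (n : ℕ) : List (Fin n) :=
  List.finRange n ++ ((List.finRange n).dropLast).reverse

/-- The word `s_{n-1} s_{n-2} ⋯ s_1 s_0 s_1 ⋯ s_{n-2} s_{n-1}`. -/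
def wordTwoB (n : ℕ) : List (Fin n) :=
  (List.finRange n).reverse ++ (List.finRange n).tail
/-!
Realize the generators as signed permutations of `ℤ`. A boolean expression `u s_c u⁻¹` then
evaluates to `σ s_c σ⁻¹ = (σc σ(c+1))(-σc -σ(c+1))` (to `(σ1 -σ1)` if `c = 0`), where `σ` is
a product of distinct generators other than `s_c`. Following `c` and `c + 1` through `σ` shows
`σ(c+1) ∈ [c+1, n]` and `σ c ∈ {-1} ∪ [1, c]`, and every reflection arising this way other than
`t₁ = (-1 n)(1 -n)` and `t₂ = (n -n)` has an explicit word shorter than `2n - 1`.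
For the lower bound, the number of inversions of `π` on `±[1, n]` plus the number of negative
values `π j`, `j ∈ [1, n]`, grows by at most `2` per generator and is `≥ 4n - 2` at `t₁` and `t₂`.
-/

namespace HyperoctahedralB

open Equiv

-- `genB` without the bound `i < n`, so that words are plain lists of naturals.
def gen (i : ℕ) : Perm ℤ :=
  if i = 0 then swap 1 (-1) else swap (i : ℤ) ((i : ℤ) + 1) * swap (-(i : ℤ)) (-((i : ℤ) + 1))

theorem gen_apply (i : ℕ) (x : ℤ) :
    gen i x = if i = 0 then (if x = 1 then -1 else if x = -1 then 1 else x)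
      else if x = i then i + 1 else if x = i + 1 then i
        else if x = -i then -i - 1 else if x = -i - 1 then -i else x := by
  rcases eq_or_ne i 0 with rfl | hi
  · simp [gen, swap_apply_def]
  · simp only [gen, if_neg hi, Perm.mul_apply, swap_apply_def]
    split_ifs <;> omega

theorem genB_eq_gen (n : ℕ) (i : Fin n) : genB n i = gen i := rfl

theorem gen_mul_self (i : ℕ) : gen i * gen i = 1 := by
  rcases eq_or_ne i 0 with rfl | hi
  · exact swap_mul_self 1 (-1)
  · ext x
    simp only [Perm.mul_apply, Perm.one_apply, gen_apply, if_neg hi]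
    split_ifs <;> omega

theorem gen_inv (i : ℕ) : (gen i)⁻¹ = gen i :=
  inv_eq_of_mul_eq_one_right (gen_mul_self i)

theorem gen_neg (i : ℕ) (x : ℤ) : gen i (-x) = -gen i x := by
  simp only [gen_apply]
  split_ifs <;> omega

def wordProd (l : List ℕ) : Perm ℤ := (l.map gen).prod

theorem wordProdB_eq_wordProd (n : ℕ) (w : List (Fin n)) :
    wordProdB n w = wordProd (w.map Fin.val) := by
  simp only [wordProdB, wordProd, List.map_map]
  rfl

@[simp]
theorem wordProd_nil : wordProd [] = 1 := rfl

@[simp]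
theorem wordProd_cons (a : ℕ) (l : List ℕ) : wordProd (a :: l) = gen a * wordProd l := by
  simp [wordProd]

@[simp]
theorem wordProd_append (l l' : List ℕ) : wordProd (l ++ l') = wordProd l * wordProd l' := by
  simp [wordProd]

@[simp]
theorem wordProd_reverse (l : List ℕ) : wordProd l.reverse = (wordProd l)⁻¹ := by
  simp [wordProd, List.prod_reverse_noncomm, Function.comp_def, gen_inv]

theorem wordProd_neg (l : List ℕ) (x : ℤ) : wordProd l (-x) = -wordProd l x := by
  induction l with
  | nil => rfl
  | cons a l ih => simp [ih, gen_neg]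

theorem wordProd_conj (u : List ℕ) (c : ℕ) :
    wordProd (u ++ [c] ++ u.reverse) = wordProd u * gen c * (wordProd u)⁻¹ := by
  simp [mul_assoc]

theorem mapsTo_wordProd {s : Set ℤ} {l : List ℕ} (h : ∀ j ∈ l, Set.MapsTo (gen j) s s) :
    Set.MapsTo (wordProd l) s s := by
  induction l with
  | nil => exact Set.mapsTo_id s
  | cons a l ih =>
    simp only [List.mem_cons, forall_eq_or_imp] at h
    simpa using h.1.comp (ih h.2)

theorem wordProd_apply_eq_self {l : List ℕ} {x : ℤ} (h : ∀ j ∈ l, gen j x = x) :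
    wordProd l x = x :=
  mapsTo_wordProd (s := {x}) (fun j hj _ hy => by simp_all) rfl

theorem wordProd_range'_reverse_apply (i m : ℕ) (hi : 1 ≤ i) :
    wordProd (List.range' i m).reverse i = i + m := by
  induction m with
  | zero => simp
  | succ m ih =>
    rw [List.range'_1_concat, List.reverse_append, wordProd_append, Perm.mul_apply, ih]
    simp only [List.reverse_cons, List.reverse_nil, List.nil_append, wordProd_cons, wordProd_nil,
      mul_one, gen_apply]
    split_ifs <;> omega

theorem conj_gen_zero {σ : Perm ℤ} (hσ : ∀ x, σ (-x) = -σ x) :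
    σ * gen 0 * σ⁻¹ = swap (σ 1) (-σ 1) := by
  rw [← hσ, swap_apply_apply]
  rfl

theorem conj_gen_of_pos {σ : Perm ℤ} (hσ : ∀ x, σ (-x) = -σ x) {c : ℕ} (hc : c ≠ 0) :
    σ * gen c * σ⁻¹ = swap (σ c) (σ (c + 1)) * swap (-σ c) (-σ (c + 1)) := by
  rw [← hσ, ← hσ, swap_apply_apply, swap_apply_apply, gen, if_neg hc]
  group

theorem range_succ_eq_cons_range' (m : ℕ) : List.range (m + 1) = 0 :: List.range' 1 m := by
  rw [List.range_eq_range', List.range'_succ]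

theorem wordProd_range_append_reverse (k : ℕ) (hk : 2 ≤ k) :
    wordProd (List.range k ++ (List.range (k - 1)).reverse) =
      swap (-1) (k : ℤ) * swap 1 (-(k : ℤ)) := by
  obtain ⟨m, rfl⟩ : ∃ m, k = m + 2 := ⟨k - 2, by omega⟩
  have hval : wordProd (List.range (m + 1)) (m + 1 : ℕ) = -1 := by
    have hchain := wordProd_range'_reverse_apply 1 m le_rfl
    rw [← Perm.eq_inv_iff_eq, ← wordProd_reverse, range_succ_eq_cons_range', List.reverse_cons,
      wordProd_append, Perm.mul_apply, wordProd_cons, wordProd_nil, mul_one,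
      show gen 0 (-1) = 1 by rfl]
    push_cast at hchain ⊢
    rw [hchain, add_comm]
  have hfix : wordProd (List.range (m + 1)) ((m + 1 : ℕ) + 1) = (m + 1 : ℕ) + 1 := by
    refine wordProd_apply_eq_self fun j hj => ?_
    have := List.mem_range.mp hj
    rw [gen_apply]
    split_ifs <;> omega
  rw [show m + 2 - 1 = m + 1 by omega, List.range_succ, wordProd_conj,
    conj_gen_of_pos (wordProd_neg _) (by omega), hval, hfix]
  push_cast
  ring_nf

theorem wordProd_reverse_range_append_tail (k : ℕ) (hk : 1 ≤ k) :
    wordProd ((List.range k).reverse ++ (List.range k).tail) = swap (k : ℤ) (-(k : ℤ)) := by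
  obtain ⟨m, rfl⟩ : ∃ m, k = m + 1 := ⟨k - 1, by omega⟩
  have hchain := wordProd_range'_reverse_apply 1 m le_rfl
  rw [range_succ_eq_cons_range', List.reverse_cons, List.tail_cons,
    ← congrArg (_ ++ ·) (List.reverse_reverse (List.range' 1 m)), wordProd_conj,
    conj_gen_zero (wordProd_neg _)]
  push_cast at hchain ⊢
  rw [hchain, add_comm]

theorem wordProd_reverse_range'_append_tail (a b : ℕ) (ha : 1 ≤ a) (hab : a < b) :
    wordProd ((List.range' a (b - a)).reverse ++ (List.range' a (b - a)).tail) =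
      swap (a : ℤ) b * swap (-(a : ℤ)) (-b) := by
  obtain ⟨m, hm⟩ : ∃ m, b - a = m + 1 := ⟨b - a - 1, by omega⟩
  have hchain := wordProd_range'_reverse_apply (a + 1) m (by omega)
  have hfix : wordProd (List.range' (a + 1) m).reverse a = a := by
    refine wordProd_apply_eq_self fun j hj => ?_
    have := List.mem_range'_1.mp (List.mem_reverse.mp hj)
    rw [gen_apply]
    split_ifs <;> omega
  rw [hm, List.range'_succ, List.reverse_cons, List.tail_cons,
    ← congrArg (_ ++ ·) (List.reverse_reverse (List.range' (a + 1) m)), wordProd_conj,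
    conj_gen_of_pos (wordProd_neg _) (by omega), hfix]
  push_cast at hchain ⊢
  rw [hchain]
  congr 3 <;> omega

open Finset

noncomputable def inversions (n : ℕ) (π : Perm ℤ) : Finset (ℤ × ℤ) :=
  (Icc (-(n : ℤ)) n ×ˢ Icc (-(n : ℤ)) n).filter
    fun p => p.1 ≠ 0 ∧ p.2 ≠ 0 ∧ p.1 < p.2 ∧ π p.2 < π p.1

noncomputable def negatives (n : ℕ) (π : Perm ℤ) : Finset ℤ := (Icc 1 (n : ℤ)).filter (π · < 0)

noncomputable def invCount (n : ℕ) (π : Perm ℤ) : ℕ := #(inversions n π) + #(negatives n π)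

theorem mem_inversions {n : ℕ} {π : Perm ℤ} {p : ℤ × ℤ} :
    p ∈ inversions n π ↔ -(n : ℤ) ≤ p.1 ∧ p.1 ≤ n ∧ -(n : ℤ) ≤ p.2 ∧ p.2 ≤ n ∧
      p.1 ≠ 0 ∧ p.2 ≠ 0 ∧ p.1 < p.2 ∧ π p.2 < π p.1 := by
  simp only [inversions, mem_filter, mem_product, mem_Icc]
  tauto

theorem mem_negatives {n : ℕ} {π : Perm ℤ} {j : ℤ} :
    j ∈ negatives n π ↔ (1 ≤ j ∧ j ≤ n) ∧ π j < 0 := by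
  rw [negatives, mem_filter, mem_Icc]

theorem card_inversions_mul_le (n : ℕ) (g : Perm ℤ) {π : Perm ℤ} (hπ : π 0 = 0)
    (E : Finset (ℤ × ℤ)) (hE : ∀ u v, u ≠ 0 → v ≠ 0 → u < v → g v < g u → (u, v) ∈ E) :
    #(inversions n (g * π)) ≤ #(inversions n π) + #E := by
  have hsub : inversions n (g * π) ⊆
      inversions n π ∪ E.image fun q : ℤ × ℤ => (π.symm q.1, π.symm q.2) := by
    intro p hp
    obtain ⟨h1, h2, h3, h4, hx, hy, hlt, hg⟩ := mem_inversions.mp hp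
    rcases lt_or_gt_of_ne (π.injective.ne hlt.ne) with hπlt | hπgt
    · refine mem_union_right _ (mem_image.mpr ⟨(π p.1, π p.2), hE _ _ ?_ ?_ hπlt hg, by simp⟩)
      · rwa [← hπ, π.injective.ne_iff]
      · rwa [← hπ, π.injective.ne_iff]
    · exact mem_union_left _ (mem_inversions.mpr ⟨h1, h2, h3, h4, hx, hy, hlt, hπgt⟩)
  calc _ ≤ _ := card_le_card hsub
    _ ≤ _ := card_union_le _ _
    _ ≤ #(inversions n π) + #E := Nat.add_le_add_left card_image_le _

theorem card_negatives_mul_le (n : ℕ) (g π : Perm ℤ) (F : Finset ℤ)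
    (hF : ∀ u, g u < 0 → u < 0 ∨ u ∈ F) :
    #(negatives n (g * π)) ≤ #(negatives n π) + #F := by
  have hsub : negatives n (g * π) ⊆ negatives n π ∪ F.image π.symm := by
    intro j hj
    rw [mem_negatives, Perm.mul_apply] at hj
    rcases hF _ hj.2 with hneg | hmem
    · exact mem_union_left _ (mem_negatives.mpr ⟨hj.1, hneg⟩)
    · exact mem_union_right _ (mem_image.mpr ⟨_, hmem, by simp⟩)
  calc _ ≤ _ := card_le_card hsub
    _ ≤ _ := card_union_le _ _
    _ ≤ #(negatives n π) + #F := Nat.add_le_add_left card_image_le _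

theorem invCount_gen_mul_le (n i : ℕ) {π : Perm ℤ} (hπ : π 0 = 0) :
    invCount n (gen i * π) ≤ invCount n π + 2 := by
  rcases eq_or_ne i 0 with rfl | hi
  · have hinv := card_inversions_mul_le n (gen 0) hπ {(-1, 1)} fun u v _ _ _ h => by
      simp only [gen_apply, ↓reduceIte] at h
      simp only [mem_singleton, Prod.ext_iff]
      split_ifs at h <;> omega
    have hneg := card_negatives_mul_le n (gen 0) π {1} fun u h => by
      simp only [gen_apply, ↓reduceIte] at h
      simp only [mem_singleton]
      split_ifs at h <;> omega
    simp only [card_singleton] at hinv hneg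
    unfold invCount
    omega
  · have hinv := card_inversions_mul_le n (gen i) hπ
      {((i : ℤ), (i : ℤ) + 1), (-(i : ℤ) - 1, -(i : ℤ))} fun u v _ _ _ h => by
        simp only [gen_apply, if_neg hi] at h
        simp only [mem_insert, mem_singleton, Prod.ext_iff]
        split_ifs at h <;> omega
    have hneg := card_negatives_mul_le n (gen i) π ∅ fun u h => by
      simp only [gen_apply, if_neg hi] at h
      split_ifs at h <;> omega
    have hE := card_le_two (a := ((i : ℤ), (i : ℤ) + 1)) (b := (-(i : ℤ) - 1, -(i : ℤ)))
    simp only [card_empty] at hneg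
    unfold invCount
    omega

theorem invCount_one (n : ℕ) : invCount n 1 = 0 := by
  simp only [invCount, Nat.add_eq_zero_iff, card_eq_zero, eq_empty_iff_forall_notMem,
    mem_inversions, mem_negatives, Perm.one_apply]
  constructor <;> intros <;> omega

theorem invCount_wordProd_le (n : ℕ) (l : List ℕ) : invCount n (wordProd l) ≤ 2 * l.length := by
  induction l with
  | nil => simp [invCount_one]
  | cons a l ih =>
    have hzero : wordProd l 0 = 0 := by
      have := wordProd_neg l 0
      rw [neg_zero] at this
      omega
    have := invCount_gen_mul_le n a hzero
    rw [wordProd_cons, List.length_cons]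
    omega

theorem four_mul_sub_two_le_invCount_swap_neg (n : ℕ) (hn : 1 ≤ n) :
    4 * n - 2 ≤ invCount n (swap (n : ℤ) (-(n : ℤ))) := by
  set P := {-(n : ℤ)} ×ˢ (Icc (-(n : ℤ) + 1) n).erase 0 ∪
    (Icc (-(n : ℤ) + 1) (n - 1)).erase 0 ×ˢ {(n : ℤ)}
  have hsub : P ⊆ inversions n (swap (n : ℤ) (-(n : ℤ))) := by
    intro p hp
    simp only [P, mem_union, mem_product, mem_singleton, mem_erase, mem_Icc] at hp
    rw [mem_inversions, swap_apply_def, swap_apply_def]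
    split_ifs <;> omega
  have hcard : #P = 4 * n - 3 := by
    rw [card_union_of_disjoint, card_product, card_product, card_singleton, card_singleton,
      card_erase_of_mem, card_erase_of_mem, Int.card_Icc, Int.card_Icc]
    · omega
    all_goals first
      | simp only [mem_Icc]; omega
      | rw [disjoint_left]; intro p
        simp only [mem_product, mem_singleton, mem_erase, mem_Icc]; omega
  have hneg : (n : ℤ) ∈ negatives n (swap (n : ℤ) (-(n : ℤ))) := by
    rw [mem_negatives, swap_apply_left]
    omega
  have := card_le_card hsub
  have := card_pos.mpr ⟨_, hneg⟩
  unfold invCount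
  omega

theorem four_mul_sub_two_le_invCount_swap_swap (n : ℕ) (hn : 2 ≤ n) :
    4 * n - 2 ≤ invCount n (swap (-1) (n : ℤ) * swap 1 (-(n : ℤ))) := by
  set P := {-1} ×ˢ Icc 1 (n : ℤ) ∪
    {-(n : ℤ)} ×ˢ insert 1 (insert (n : ℤ) (Icc (-(n : ℤ) + 1) (-2))) ∪
    Icc (-(n : ℤ) + 1) (-2) ×ˢ {1} ∪ Icc 2 ((n : ℤ) - 1) ×ˢ {(n : ℤ)}
  have hsub : P ⊆ inversions n (swap (-1) (n : ℤ) * swap 1 (-(n : ℤ))) := by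
    intro p hp
    simp only [P, mem_union, mem_product, mem_singleton, mem_insert, mem_Icc] at hp
    simp only [mem_inversions, Perm.mul_apply, swap_apply_def]
    split_ifs <;> omega
  have hcard : #P = 4 * n - 4 := by
    rw [card_union_of_disjoint, card_union_of_disjoint, card_union_of_disjoint, card_product,
      card_product, card_product, card_product, card_singleton, card_singleton, card_singleton,
      card_singleton, card_insert_of_notMem, card_insert_of_notMem, Int.card_Icc, Int.card_Icc,
      Int.card_Icc]
    · omega
    all_goals first
      | simp only [mem_insert, mem_Icc]; omega
      | rw [disjoint_left]; intro p
        simp only [mem_union, mem_product, mem_singleton, mem_insert, mem_Icc]; omega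
  have hneg : {1, (n : ℤ)} ⊆ negatives n (swap (-1) (n : ℤ) * swap 1 (-(n : ℤ))) := by
    intro j hj
    simp only [mem_insert, mem_singleton] at hj
    simp only [mem_negatives, Perm.mul_apply, swap_apply_def]
    split_ifs <;> omega
  have := card_le_card hsub
  have := card_le_card hneg
  rw [card_pair (by omega)] at this
  unfold invCount
  omega

theorem wordProd_apply_mem_Icc {c n : ℕ} {L : List ℕ} (hL : ∀ j ∈ L, j ≠ c ∧ j < n) {y : ℤ}
    (hy : y ∈ Set.Icc ((c : ℤ) + 1) n) : wordProd L y ∈ Set.Icc ((c : ℤ) + 1) n := by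
  refine mapsTo_wordProd (fun j hj x hx => ?_) hy
  have := hL j hj
  simp only [Set.mem_Icc] at hx ⊢
  rw [gen_apply]
  split_ifs <;> omega

theorem gen_apply_chain_step {a c : ℕ} {y : ℤ} (hc : 1 ≤ c) (hac : a ≠ c)
    (hy : y = -1 ∨ 1 ≤ y ∧ y ≤ c) (ha : ¬(y ≤ a ∧ a < c)) :
    (gen a y = -1 ∨ 1 ≤ gen a y ∧ gen a y ≤ c) ∧ ∀ j : ℕ, gen a y ≤ j → j ≠ a → y ≤ j := by
  constructor
  · rw [gen_apply]
    split_ifs <;> omega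
  · intro j
    rw [gen_apply]
    split_ifs <;> omega

-- Generators are used at most once, so the image of `c` can only step down (from `y` to `y - 1`
-- via `s_{y-1}`, or from `1` to `-1` via `s_0`), using up every generator it passes.
theorem wordProd_apply_chain {c : ℕ} (hc : 1 ≤ c) {L : List ℕ} (hnd : L.Nodup) (hcL : c ∉ L) :
    (wordProd L c = -1 ∨ 1 ≤ wordProd L c ∧ wordProd L c ≤ c) ∧
      ∀ j : ℕ, wordProd L c ≤ j → j < c → j ∈ L := by
  induction L with
  | nil => exact ⟨Or.inr ⟨by simpa using hc, by simp⟩, fun j h1 h2 => by simp at h1; omega⟩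
  | cons a L ih =>
    obtain ⟨haL, hnd⟩ := List.nodup_cons.mp hnd
    obtain ⟨hca, hcL⟩ := not_or.mp (List.mem_cons.not.mp hcL)
    obtain ⟨hy, hmem⟩ := ih hnd hcL
    obtain ⟨hy', hmem'⟩ := gen_apply_chain_step hc (Ne.symm hca) hy
      fun h => haL (hmem a h.1 h.2)
    rw [wordProd_cons, Perm.mul_apply]
    refine ⟨hy', fun j hj hjc => ?_⟩
    rcases eq_or_ne j a with rfl | hja
    · exact List.mem_cons_self
    · exact List.mem_cons_of_mem a (hmem j (hmem' j hj hja) hjc)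

def HasShortWord (n : ℕ) (t : Perm ℤ) : Prop :=
  ∃ L : List ℕ, (∀ j ∈ L, j < n) ∧ L.length < 2 * n - 1 ∧ wordProd L = t

theorem hasShortWord_swap_neg {n k : ℕ} (hk : 1 ≤ k) (hkn : k < n) :
    HasShortWord n (swap (k : ℤ) (-(k : ℤ))) := by
  refine ⟨_, fun j hj => ?_, ?_, wordProd_reverse_range_append_tail k hk⟩
  · simp only [List.mem_append, List.mem_reverse, List.mem_range] at hj
    rcases hj with hj | hj
    · omega
    · have := List.mem_range.mp (List.mem_of_mem_tail hj); omega
  · simp only [List.length_append, List.length_reverse, List.length_tail, List.length_range]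
    omega

theorem hasShortWord_swap_swap_neg_one {n k : ℕ} (hk : 2 ≤ k) (hkn : k < n) :
    HasShortWord n (swap (-1) (k : ℤ) * swap 1 (-(k : ℤ))) := by
  refine ⟨_, fun j hj => ?_, ?_, wordProd_range_append_reverse k hk⟩
  · simp only [List.mem_append, List.mem_reverse, List.mem_range] at hj
    omega
  · simp only [List.length_append, List.length_reverse, List.length_range]
    omega

theorem hasShortWord_swap_swap {n a b : ℕ} (ha : 1 ≤ a) (hab : a < b) (hbn : b ≤ n) :
    HasShortWord n (swap (a : ℤ) b * swap (-(a : ℤ)) (-b)) := by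
  refine ⟨_, fun j hj => ?_, ?_, wordProd_reverse_range'_append_tail a b ha hab⟩
  · simp only [List.mem_append, List.mem_reverse] at hj
    rcases hj with hj | hj
    · have := List.mem_range'_1.mp hj; omega
    · have := List.mem_range'_1.mp (List.mem_of_mem_tail hj); omega
  · simp only [List.length_append, List.length_reverse, List.length_tail, List.length_range']
    omega

theorem conj_gen_eq_or_hasShortWord {n c : ℕ} {L : List ℕ} (hnd : L.Nodup) (hcL : c ∉ L)
    (hLn : ∀ j ∈ L, j < n) (hcn : c < n) :
    wordProd L * gen c * (wordProd L)⁻¹ = swap (-1) (n : ℤ) * swap 1 (-(n : ℤ)) ∨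
      wordProd L * gen c * (wordProd L)⁻¹ = swap (n : ℤ) (-(n : ℤ)) ∨
      HasShortWord n (wordProd L * gen c * (wordProd L)⁻¹) := by
  have hL : ∀ j ∈ L, j ≠ c ∧ j < n := fun j hj => ⟨ne_of_mem_of_not_mem hj hcL, hLn j hj⟩
  obtain ⟨hb1, hbn⟩ := wordProd_apply_mem_Icc hL (y := (c : ℤ) + 1) ⟨le_rfl, by omega⟩
  obtain ⟨b, hb⟩ := Int.eq_ofNat_of_zero_le (a := wordProd L ((c : ℤ) + 1)) (by omega)
  rw [hb] at hb1 hbn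
  rcases eq_or_ne c 0 with rfl | hc0
  · rw [conj_gen_zero (wordProd_neg L)]
    rw [Nat.cast_zero, zero_add] at hb
    rcases (Nat.cast_le.mp hbn).eq_or_lt with rfl | hbn
    · exact Or.inr (Or.inl (by rw [hb]))
    · exact Or.inr (Or.inr (by rw [hb]; exact hasShortWord_swap_neg (by omega) hbn))
  · rw [conj_gen_of_pos (wordProd_neg L) hc0, hb]
    rcases (wordProd_apply_chain (by omega) hnd hcL).1 with ha | ⟨ha1, hac⟩
    · rw [ha, neg_neg]
      rcases (Nat.cast_le.mp hbn).eq_or_lt with rfl | hbn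
      · exact Or.inl rfl
      · exact Or.inr (Or.inr (hasShortWord_swap_swap_neg_one (by omega) hbn))
    · obtain ⟨a, ha⟩ := Int.eq_ofNat_of_zero_le (a := wordProd L c) (by omega)
      rw [ha] at ha1 hac ⊢
      exact Or.inr (Or.inr (hasShortWord_swap_swap (by omega) (by omega) (by omega)))

theorem not_hasShortWord_of_reducedB {n : ℕ} {w : List (Fin n)} (hw : ReducedB n w)
    (hlen : w.length = 2 * n - 1) : ¬HasShortWord n (wordProdB n w) := by
  rintro ⟨L, hLn, hL, hprod⟩
  lift L to List (Fin n) using hLn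
  have := hw L (by rw [wordProdB_eq_wordProd, hprod])
  rw [List.length_map] at hL
  omega

theorem reducedB_of_two_mul_length_le {n : ℕ} {w : List (Fin n)}
    (h : 2 * w.length ≤ invCount n (wordProdB n w)) : ReducedB n w := by
  intro w' hw'
  have := invCount_wordProd_le n (w'.map Fin.val)
  rw [← wordProdB_eq_wordProd, hw', List.length_map] at this
  omega

theorem wordProdB_append_reverse (n : ℕ) (l : List (Fin n)) (c : Fin n) :
    wordProdB n (l ++ [c] ++ l.reverse) = wordProdB n l * genB n c * (wordProdB n l)⁻¹ := by
  simp only [wordProdB_eq_wordProd, List.map_append, List.map_reverse, List.map_cons,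
    List.map_nil, wordProd_conj]
  rfl

theorem isBooleanReflectionB_wordProdB {n : ℕ} {w : List (Fin n)}
    (hw : ∃ l c, (l ++ [c]).Nodup ∧ w = l ++ [c] ++ l.reverse) (hred : ReducedB n w) :
    IsBooleanReflectionB n (wordProdB n w) := by
  obtain ⟨l, c, hnd, rfl⟩ := hw
  exact ⟨⟨l, c, wordProdB_append_reverse n l c⟩, l, c, hnd, hred, rfl⟩

theorem eq_or_eq_of_isBooleanReflectionB {n : ℕ} {t : Perm ℤ} (ht : IsBooleanReflectionB n t)
    {w : List (Fin n)} (hw : ReducedB n w) (hwt : wordProdB n w = t)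
    (hlen : w.length = 2 * n - 1) :
    t = swap (-1) (n : ℤ) * swap 1 (-(n : ℤ)) ∨ t = swap (n : ℤ) (-(n : ℤ)) := by
  obtain ⟨-, l, c, hnd, -, rfl⟩ := ht
  have hcl : c ∉ l := fun h => (List.nodup_append.mp hnd).2.2 c h c (List.mem_singleton_self c) rfl
  have hcL : c.val ∉ l.map Fin.val := fun h => by
    obtain ⟨a, ha, hac⟩ := List.mem_map.mp h
    exact hcl (Fin.ext hac ▸ ha)
  rw [wordProdB_append_reverse, wordProdB_eq_wordProd n l, genB_eq_gen] at hwt ⊢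
  rcases conj_gen_eq_or_hasShortWord ((List.nodup_append.mp hnd).1.map Fin.val_injective) hcL
    (by simp) c.isLt with h | h | h
  · exact Or.inl h
  · exact Or.inr h
  · rw [← hwt] at h
    exact absurd h (not_hasShortWord_of_reducedB hw hlen)

theorem map_val_wordOneB (n : ℕ) :
    (wordOneB n).map Fin.val = List.range n ++ (List.range (n - 1)).reverse := by
  simp only [wordOneB, List.map_append, List.map_reverse, List.map_dropLast,
    List.map_coe_finRange_eq_range]
  cases n with
  | zero => rfl
  | succ m => rw [List.range_succ, List.dropLast_concat, Nat.add_sub_cancel]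

theorem map_val_wordTwoB (n : ℕ) :
    (wordTwoB n).map Fin.val = (List.range n).reverse ++ (List.range n).tail := by
  simp only [wordTwoB, List.map_append, List.map_reverse, List.map_tail,
    List.map_coe_finRange_eq_range]

theorem wordProdB_wordOneB {n : ℕ} (hn : 2 ≤ n) :
    wordProdB n (wordOneB n) = swap (-1) (n : ℤ) * swap 1 (-(n : ℤ)) := by
  rw [wordProdB_eq_wordProd, map_val_wordOneB, wordProd_range_append_reverse n hn]

theorem wordProdB_wordTwoB {n : ℕ} (hn : 1 ≤ n) :
    wordProdB n (wordTwoB n) = swap (n : ℤ) (-(n : ℤ)) := by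
  rw [wordProdB_eq_wordProd, map_val_wordTwoB, wordProd_reverse_range_append_tail n hn]

theorem length_wordOneB (n : ℕ) : (wordOneB n).length = 2 * n - 1 := by
  simp only [wordOneB, List.length_append, List.length_reverse, List.length_dropLast,
    List.length_finRange]
  omega

theorem length_wordTwoB (n : ℕ) : (wordTwoB n).length = 2 * n - 1 := by
  simp only [wordTwoB, List.length_append, List.length_reverse, List.length_tail,
    List.length_finRange]
  omega

theorem reducedB_wordOneB {n : ℕ} (hn : 2 ≤ n) : ReducedB n (wordOneB n) := by
  apply reducedB_of_two_mul_length_le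
  rw [length_wordOneB, wordProdB_wordOneB hn]
  have := four_mul_sub_two_le_invCount_swap_swap n hn
  omega

theorem reducedB_wordTwoB {n : ℕ} (hn : 1 ≤ n) : ReducedB n (wordTwoB n) := by
  apply reducedB_of_two_mul_length_le
  rw [length_wordTwoB, wordProdB_wordTwoB hn]
  have := four_mul_sub_two_le_invCount_swap_neg n hn
  omega

theorem wordOneB_eq_append_reverse {n : ℕ} (hn : 1 ≤ n) :
    ∃ l c, (l ++ [c]).Nodup ∧ wordOneB n = l ++ [c] ++ l.reverse := by
  have hne : List.finRange n ≠ [] := by simp [List.finRange_eq_nil_iff]; omega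
  have hsplit := List.dropLast_append_getLast hne
  refine ⟨_, _, hsplit ▸ List.nodup_finRange n, ?_⟩
  rw [hsplit]
  rfl

theorem wordTwoB_eq_append_reverse {n : ℕ} (hn : 1 ≤ n) :
    ∃ l c, (l ++ [c]).Nodup ∧ wordTwoB n = l ++ [c] ++ l.reverse := by
  have hne : List.finRange n ≠ [] := by simp [List.finRange_eq_nil_iff]; omega
  have hsplit : (List.finRange n).tail.reverse ++ [(List.finRange n).head hne] =
      (List.finRange n).reverse := by
    rw [← List.reverse_cons, List.cons_head_tail]
  refine ⟨_, _, hsplit ▸ List.nodup_reverse.mpr (List.nodup_finRange n), ?_⟩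
  rw [hsplit, List.reverse_reverse]
  rfl

theorem swap_mul_swap_ne_swap {n : ℕ} (hn : 2 ≤ n) :
    swap (-1) (n : ℤ) * swap 1 (-(n : ℤ)) ≠ swap (n : ℤ) (-(n : ℤ)) := by
  intro h
  have h1 := DFunLike.congr_fun h 1
  simp only [Perm.mul_apply, swap_apply_def] at h1
  split_ifs at h1 <;> omega

end HyperoctahedralB

open HyperoctahedralB

theorem stmt6 (n : ℕ) (hn : 2 ≤ n) :
    ReducedB n (wordOneB n) ∧ ReducedB n (wordTwoB n) ∧
    (wordOneB n).length = 2 * n - 1 ∧ (wordTwoB n).length = 2 * n - 1 ∧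
    wordProdB n (wordOneB n) ≠ wordProdB n (wordTwoB n) ∧
    IsBooleanReflectionB n (wordProdB n (wordOneB n)) ∧
    IsBooleanReflectionB n (wordProdB n (wordTwoB n)) ∧
    (∀ t : Equiv.Perm ℤ, IsBooleanReflectionB n t →
      (∃ w : List (Fin n), ReducedB n w ∧ wordProdB n w = t ∧ w.length = 2 * n - 1) →
      (t = wordProdB n (wordOneB n) ∨ t = wordProdB n (wordTwoB n))) := by
  have hn1 : 1 ≤ n := by omega
  refine ⟨reducedB_wordOneB hn, reducedB_wordTwoB hn1, length_wordOneB n, length_wordTwoB n, ?_,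
    isBooleanReflectionB_wordProdB (wordOneB_eq_append_reverse hn1) (reducedB_wordOneB hn),
    isBooleanReflectionB_wordProdB (wordTwoB_eq_append_reverse hn1) (reducedB_wordTwoB hn1),
    fun t ht ⟨w, hw, hwt, hlen⟩ => ?_⟩
  · rw [wordProdB_wordOneB hn, wordProdB_wordTwoB hn1]
    exact swap_mul_swap_ne_swap hn
  · rw [wordProdB_wordOneB hn, wordProdB_wordTwoB hn1]
    exact eq_or_eq_of_isBooleanReflectionB ht hw hwt hlen
end

section
/- Let n ≥ 2 and let π ∈ B_n be the product of some subsequence of the word (s_0, s_1, …, s_{n−2}, s_{n−1}, s_{n−2}, …, s_1, s_0), and let w be any reduced expression of π that is a subsequence of this word. Then: (a) for 1 ≤ i ≤ n−1, s_i occurs 0 times in w if and only if π({i+1,…,n}) = {i+1,…,n}, and s_i occurs exactly 2 times in w if and only if π(i+1) = i+1 and π({i+1,…,n}) ≠ {i+1,…,n}; if s_i occurs exactly once then i+1 is a top excedance of π or of π^{-1}; (b) s_0 occurs 0 times in w if and only if the window notation of π has no negative entry, s_0 occurs exactly 2 times if and only if it has exactly two negative entries, and s_0 occurs exactly once if and only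 if it has exactly one negative entry, in which case that entry is −1 or lies in the first position. -/
/-!
Write `w = u v` with `u` a subword of `s_0 ⋯ s_{n-1}` and `v` one of `s_{n-2} ⋯ s_0`; each
generator `s_g` occurs at most once in each half, and the letters of `u` before `s_g` and of
`v` after it are smaller than `g`. Letters other than `s_g` preserve the half-line `x > g`
and all letters preserve `x ≤ n`, so the case analysis is driven by where `s_g` sends `g + 1`.
If `s_g` occurs in `v` only, `π (g + 1) ≤ g`; if only in `u`, the same holds for `π⁻¹`,
which is the product of the reversed word. If `s_g` occurs twice, `w = X s_g R s_g Z` with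
the letters of `R` larger than `g`, and reducedness forces `R (g + 1) ≠ g + 1`: otherwise `R`
would fix every point moved by `s_g`, commute with it, and the two copies of `s_g` would cancel.
For `g = 0`, a word `A s_0 B` with no other `s_0` has a single negative entry, at position
`B⁻¹ 1` and with value `-A 1`, while `s_0 R s_0` has exactly two, at `1` and at `R⁻¹ 1`.
-/

lemma Finset.image_perm_eq_self_iff {α : Type*} [DecidableEq α] (π : Equiv.Perm α)
    (s : Finset α) : s.image π = s ↔ ∀ x, π x ∈ s ↔ x ∈ s := by
  constructor
  · intro h x
    refine ⟨fun hx => ?_, fun hx => h ▸ Finset.mem_image_of_mem π hx⟩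
    obtain ⟨y, hy, hxy⟩ := Finset.mem_image.mp (h.symm ▸ hx)
    exact π.injective hxy ▸ hy
  · intro h
    refine Finset.eq_of_subset_of_card_le ?_ (Finset.card_image_of_injective s π.injective).ge
    exact Finset.image_subset_iff.mpr fun x hx => (h x).mpr hx

lemma List.exists_eq_append_cons_of_pairwise {α : Type*} {r : α → α → Prop} {l : List α}
    {a : α} (hl : l.Pairwise r) (ha : a ∈ l) :
    ∃ l₁ l₂, l = l₁ ++ a :: l₂ ∧ (∀ x ∈ l₁, r x a) ∧ ∀ x ∈ l₂, r a x := by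
  obtain ⟨l₁, l₂, rfl⟩ := List.append_of_mem ha
  obtain ⟨-, h₂, h₁₂⟩ := List.pairwise_append.mp hl
  exact ⟨l₁, l₂, rfl, fun x hx => h₁₂ x hx a List.mem_cons_self,
    (List.pairwise_cons.mp h₂).1⟩

section

variable {n : ℕ}

lemma genB_apply (j : Fin n) (x : ℤ) :
    genB n j x =
      if (j : ℕ) = 0 then (if x = 1 then -1 else if x = -1 then 1 else x)
      else if x = j then j + 1 else if x = j + 1 then j
      else if x = -j then -(j + 1) else if x = -(j + 1) then -j else x := by
  unfold genB
  split_ifs <;> simp only [Equiv.Perm.mul_apply, Equiv.swap_apply_def] <;> split_ifs <;> omega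

lemma genB_apply_neg (j : Fin n) (x : ℤ) : genB n j (-x) = -genB n j x := by
  rw [genB_apply, genB_apply]; split_ifs <;> omega

lemma genB_mul_self (j : Fin n) : genB n j * genB n j = 1 := by
  ext x
  have hy := genB_apply j x
  rw [Equiv.Perm.mul_apply, Equiv.Perm.one_apply, genB_apply j (genB n j x)]
  split_ifs at hy ⊢ <;> omega

lemma genB_apply_of_lt (j : Fin n) {x : ℤ} (h : (j : ℤ) + 1 < x) : genB n j x = x := by
  rw [genB_apply]; split_ifs <;> omega

lemma genB_apply_of_abs_lt (j : Fin n) {x : ℤ} (h₁ : -(j : ℤ) < x) (h₂ : x < j) :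
    genB n j x = x := by
  rw [genB_apply]; split_ifs <;> omega

lemma genB_apply_of_ne (g : Fin n) {x : ℤ} (h₁ : x ≠ g) (h₂ : x ≠ -g) (h₃ : x ≠ g + 1)
    (h₄ : x ≠ -(g + 1)) : genB n g x = x := by
  rw [genB_apply]; split_ifs <;> omega

lemma genB_apply_self {g : Fin n} (hg : (g : ℕ) ≠ 0) : genB n g g = g + 1 := by
  rw [genB_apply]; split_ifs <;> omega

lemma genB_apply_self_add_one {g : Fin n} (hg : (g : ℕ) ≠ 0) : genB n g (g + 1) = g := by
  rw [genB_apply]; split_ifs <;> omega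

lemma genB_apply_self_add_one_le (g : Fin n) : genB n g (g + 1) ≤ g := by
  rw [genB_apply]; split_ifs <;> omega

lemma genB_zero_apply {g : Fin n} (hg : (g : ℕ) = 0) (x : ℤ) :
    genB n g x = if x = 1 then -1 else if x = -1 then 1 else x := by
  rw [genB_apply, if_pos hg]

lemma lt_genB_apply_iff {j g : Fin n} (hj : j ≠ g) (x : ℤ) :
    (g : ℤ) < genB n j x ↔ (g : ℤ) < x := by
  have : (j : ℤ) ≠ g := by exact_mod_cast Fin.val_ne_of_ne hj
  rw [genB_apply]; split_ifs <;> omega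

lemma genB_apply_le_iff (j : Fin n) (x : ℤ) : genB n j x ≤ n ↔ x ≤ n := by
  have : (j : ℤ) + 1 ≤ n := by exact_mod_cast j.isLt
  rw [genB_apply]; split_ifs <;> omega

@[simp]
lemma wordProdB_nil : wordProdB n [] = 1 := rfl

@[simp]
lemma wordProdB_cons (a : Fin n) (l : List (Fin n)) :
    wordProdB n (a :: l) = genB n a * wordProdB n l := by
  simp [wordProdB]

@[simp]
lemma wordProdB_append (l₁ l₂ : List (Fin n)) :
    wordProdB n (l₁ ++ l₂) = wordProdB n l₁ * wordProdB n l₂ := by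
  simp [wordProdB]

lemma wordProdB_reverse (l : List (Fin n)) : wordProdB n l.reverse = (wordProdB n l)⁻¹ := by
  have hinv : ∀ j : Fin n, (genB n j)⁻¹ = genB n j :=
    fun j => inv_eq_of_mul_eq_one_right (genB_mul_self j)
  rw [wordProdB, wordProdB, List.map_reverse, List.prod_reverse_noncomm, List.map_map]
  simp [Function.comp_def, hinv]

lemma wordProdB_apply_neg (l : List (Fin n)) (x : ℤ) :
    wordProdB n l (-x) = -wordProdB n l x := by
  induction l with
  | nil => rfl
  | cons a l ih => simp [ih, genB_apply_neg]

lemma wordProdB_apply_eq_self {l : List (Fin n)} {x : ℤ} (h : ∀ j ∈ l, genB n j x = x) :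
    wordProdB n l x = x := by
  induction l with
  | nil => rfl
  | cons a l ih => simp_all

lemma wordProdB_apply_of_forall_lt {l : List (Fin n)} {g : Fin n} (hl : ∀ j ∈ l, j < g) :
    wordProdB n l (g + 1) = g + 1 :=
  wordProdB_apply_eq_self fun j hj =>
    genB_apply_of_lt j (by have : (j : ℕ) < g := hl j hj; omega)

lemma wordProdB_apply_of_forall_gt {l : List (Fin n)} {g : Fin n} (hl : ∀ j ∈ l, g < j)
    {x : ℤ} (h₁ : -(g : ℤ) ≤ x) (h₂ : x ≤ g) : wordProdB n l x = x :=
  wordProdB_apply_eq_self fun j hj =>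
    have : (g : ℕ) < j := hl j hj
    genB_apply_of_abs_lt j (by omega) (by omega)

lemma wordProdB_apply_iff {p : ℤ → Prop} {l : List (Fin n)}
    (h : ∀ j ∈ l, ∀ x, p (genB n j x) ↔ p x) (x : ℤ) : p (wordProdB n l x) ↔ p x := by
  induction l generalizing x with
  | nil => rfl
  | cons a l ih => simp_all

lemma wordProdB_apply_mem_Icc_iff {l : List (Fin n)} {g : Fin n} (hg : g ∉ l) (x : ℤ) :
    wordProdB n l x ∈ Finset.Icc ((g : ℤ) + 1) n ↔ x ∈ Finset.Icc ((g : ℤ) + 1) n := by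
  simp only [Finset.mem_Icc, Int.add_one_le_iff]
  refine wordProdB_apply_iff (p := fun y => (g : ℤ) < y ∧ y ≤ n) (fun j hj y => ?_) x
  rw [lt_genB_apply_iff (ne_of_mem_of_not_mem hj hg), genB_apply_le_iff]

lemma wordProdB_append_cons_apply_le {X Z : List (Fin n)} {g : Fin n} (hX : g ∉ X)
    (hZ : ∀ j ∈ Z, j < g) : wordProdB n (X ++ g :: Z) (g + 1) ≤ g := by
  have hle := genB_apply_self_add_one_le g
  have hXle := (wordProdB_apply_iff (p := fun y => (g : ℤ) < y)
    (fun j hj => lt_genB_apply_iff (ne_of_mem_of_not_mem hj hX)) (genB n g (g + 1))).not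
  simp only [wordProdB_append, wordProdB_cons, Equiv.Perm.mul_apply,
    wordProdB_apply_of_forall_lt hZ]
  omega

lemma genB_mul_wordProdB_mul_genB {R : List (Fin n)} {g : Fin n} (hR : ∀ j ∈ R, g < j)
    (hfix : wordProdB n R (g + 1) = g + 1) :
    genB n g * wordProdB n R * genB n g = wordProdB n R := by
  have hdisj : (wordProdB n R).Disjoint (genB n g) := by
    intro x
    by_cases h₁ : x = g
    · exact .inl (h₁ ▸ wordProdB_apply_of_forall_gt hR (by omega) le_rfl)
    by_cases h₂ : x = -g
    · exact .inl (h₂ ▸ wordProdB_apply_of_forall_gt hR le_rfl (by omega))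
    by_cases h₃ : x = g + 1
    · exact .inl (h₃ ▸ hfix)
    by_cases h₄ : x = -(g + 1)
    · exact .inl (by rw [h₄, wordProdB_apply_neg, hfix])
    exact .inr (genB_apply_of_ne g h₁ h₂ h₃ h₄)
  rw [← hdisj.commute.eq, mul_assoc, genB_mul_self, mul_one]

lemma wordProdB_apply_ne_of_reducedB {X R Z : List (Fin n)} {g : Fin n}
    (hred : ReducedB n (X ++ g :: R ++ g :: Z)) (hR : ∀ j ∈ R, g < j) :
    wordProdB n R (g + 1) ≠ g + 1 := by
  intro hfix
  have hshort : wordProdB n (X ++ R ++ Z) = wordProdB n (X ++ g :: R ++ g :: Z) :=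
    calc wordProdB n (X ++ R ++ Z)
        = wordProdB n X * (genB n g * wordProdB n R * genB n g) * wordProdB n Z := by
          rw [genB_mul_wordProdB_mul_genB hR hfix, wordProdB_append, wordProdB_append]
      _ = wordProdB n (X ++ g :: R ++ g :: Z) := by simp [mul_assoc]
  have := hred _ hshort
  simp at this

lemma sublist_wordOneB_cases {w : List (Fin n)} (hsub : w.Sublist (wordOneB n))
    (g : Fin n) :
    g ∉ w ∨
    (∃ X Z, w = X ++ g :: Z ∧ (∀ j ∈ X, j < g) ∧ g ∉ Z) ∨
    (∃ X Z, w = X ++ g :: Z ∧ g ∉ X ∧ ∀ j ∈ Z, j < g) ∨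
    ∃ X R Z, w = X ++ g :: R ++ g :: Z ∧ (∀ j ∈ X, j < g) ∧ (∀ j ∈ R, g < j) ∧
      ∀ j ∈ Z, j < g := by
  obtain ⟨u, v, rfl, hu, hv⟩ := List.sublist_append_iff.mp hsub
  have hu : u.Pairwise (· < ·) := (List.pairwise_lt_finRange n).sublist hu
  have hv : v.Pairwise (· > ·) :=
    (List.pairwise_reverse.mpr ((List.pairwise_lt_finRange n).sublist
      (List.dropLast_sublist _))).sublist hv
  by_cases hgu : g ∈ u <;> by_cases hgv : g ∈ v
  · obtain ⟨ul, uh, rfl, hul, huh⟩ := List.exists_eq_append_cons_of_pairwise hu hgu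
    obtain ⟨vh, vl, rfl, hvh, hvl⟩ := List.exists_eq_append_cons_of_pairwise hv hgv
    refine .inr <| .inr <| .inr ⟨ul, uh ++ vh, vl, by simp, hul, ?_, hvl⟩
    simpa [or_imp, forall_and] using ⟨huh, hvh⟩
  · obtain ⟨ul, uh, rfl, hul, huh⟩ := List.exists_eq_append_cons_of_pairwise hu hgu
    refine .inr <| .inl ⟨ul, uh ++ v, by simp, hul, ?_⟩
    simpa [hgv] using fun h => lt_irrefl g (huh g h)
  · obtain ⟨vh, vl, rfl, hvh, hvl⟩ := List.exists_eq_append_cons_of_pairwise hv hgv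
    refine .inr <| .inr <| .inl ⟨u ++ vh, vl, by simp, ?_, hvl⟩
    simpa [hgu] using fun h => lt_irrefl g (hvh g h)
  · exact .inl (by simp [hgu, hgv])

lemma image_Icc_ne_and_apply_ne {m N : ℤ} (hmN : m + 1 ≤ N) {π : Equiv.Perm ℤ}
    (h : π.symm (m + 1) ≤ m ∨ π (m + 1) ≤ m) :
    (Finset.Icc (m + 1) N).image π ≠ Finset.Icc (m + 1) N ∧ π (m + 1) ≠ m + 1 := by
  constructor
  · intro himg
    have hmem := (Finset.image_perm_eq_self_iff π _).mp himg
    rcases h with h | h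
    · have := hmem (π.symm (m + 1))
      simp only [Equiv.apply_symm_apply, Finset.mem_Icc] at this
      omega
    · have := hmem (m + 1)
      simp only [Finset.mem_Icc] at this
      omega
  · intro hfix
    rcases h with h | h
    · rw [π.symm_apply_eq.mpr hfix.symm] at h
      omega
    · omega

lemma apply_eq_and_image_Icc_ne_of_reducedB {X R Z : List (Fin n)} {g : Fin n}
    (hg : (g : ℕ) ≠ 0) (hred : ReducedB n (X ++ g :: R ++ g :: Z)) (hX : ∀ j ∈ X, j < g)
    (hR : ∀ j ∈ R, g < j) (hZ : ∀ j ∈ Z, j < g) :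
    wordProdB n (X ++ g :: R ++ g :: Z) (g + 1) = g + 1 ∧
      (Finset.Icc ((g : ℤ) + 1) n).image (wordProdB n (X ++ g :: R ++ g :: Z)) ≠
        Finset.Icc ((g : ℤ) + 1) n := by
  have hgn : (g : ℤ) + 1 ≤ n := by exact_mod_cast g.isLt
  have hX' : g ∉ X := fun h => lt_irrefl g (hX g h)
  have hR' : g ∉ R := fun h => lt_irrefl g (hR g h)
  refine ⟨?_, fun himg => ?_⟩
  · simp only [wordProdB_append, wordProdB_cons, Equiv.Perm.mul_apply]
    rw [wordProdB_apply_of_forall_lt hZ, genB_apply_self_add_one hg,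
      wordProdB_apply_of_forall_gt hR (by omega) le_rfl, genB_apply_self hg,
      wordProdB_apply_of_forall_lt hX]
  set x₀ := (wordProdB n R).symm (g + 1)
  have hRx₀ : wordProdB n R x₀ = g + 1 := Equiv.apply_symm_apply _ _
  have hx₀ : x₀ ∈ Finset.Icc ((g : ℤ) + 1) n := by
    rw [← wordProdB_apply_mem_Icc_iff hR', hRx₀]
    simp [hgn]
  have hx₀_ne : x₀ ≠ g + 1 := fun h => wordProdB_apply_ne_of_reducedB hred hR (h ▸ hRx₀)
  rw [Finset.mem_Icc] at hx₀
  have hπx₀ : wordProdB n (X ++ g :: R ++ g :: Z) x₀ ≤ g := by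
    have hZx₀ : wordProdB n Z x₀ = x₀ := wordProdB_apply_eq_self fun j hj =>
      have : (j : ℕ) < g := hZ j hj
      genB_apply_of_lt j (by omega)
    have hgx₀ : genB n g x₀ = x₀ := genB_apply_of_lt g (by omega)
    have := wordProdB_append_cons_apply_le hX' (Z := []) (by simp)
    simp only [wordProdB_append, wordProdB_cons, wordProdB_nil, Equiv.Perm.mul_apply,
      mul_one] at this ⊢
    rwa [hZx₀, hgx₀, hRx₀]
  have := (Finset.image_perm_eq_self_iff _ _).mp himg x₀
  simp only [Finset.mem_Icc] at this
  omega

theorem count_genB_of_sublist_wordOneB {w : List (Fin n)} (hsub : w.Sublist (wordOneB n))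
    (hred : ReducedB n w) (g : Fin n) (hg : (g : ℕ) ≠ 0) :
    (w.count g = 0 ↔
        (Finset.Icc ((g : ℤ) + 1) n).image (wordProdB n w) = Finset.Icc ((g : ℤ) + 1) n) ∧
    (w.count g = 2 ↔
        wordProdB n w (g + 1) = g + 1 ∧
          (Finset.Icc ((g : ℤ) + 1) n).image (wordProdB n w) ≠ Finset.Icc ((g : ℤ) + 1) n) ∧
    (w.count g = 1 →
        (wordProdB n w).symm (g + 1) < g + 1 ∨ wordProdB n w (g + 1) < g + 1) := by
  have hgn : (g : ℤ) + 1 ≤ n := by exact_mod_cast g.isLt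
  rcases sublist_wordOneB_cases hsub g with
    hw | ⟨X, Z, rfl, hX, hZ⟩ | ⟨X, Z, rfl, hX, hZ⟩ | ⟨X, R, Z, rfl, hX, hR, hZ⟩
  · have hc : w.count g = 0 := List.count_eq_zero.mpr hw
    have himg := (Finset.image_perm_eq_self_iff _ _).mpr (wordProdB_apply_mem_Icc_iff hw)
    exact ⟨iff_of_true hc himg, iff_of_false (by omega) fun h => h.2 himg, by omega⟩
  · have hX' : g ∉ X := fun h => lt_irrefl g (hX g h)
    have hc : (X ++ g :: Z).count g = 1 := by simp [List.count_eq_zero.mpr, hX', hZ]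
    have hle : (wordProdB n (X ++ g :: Z)).symm (g + 1) ≤ g := by
      rw [← Equiv.Perm.inv_def, ← wordProdB_reverse, List.reverse_append, List.reverse_cons,
        List.append_assoc, List.singleton_append]
      exact wordProdB_append_cons_apply_le (by simpa using hZ) (by simpa using hX)
    obtain ⟨himg, hfix⟩ := image_Icc_ne_and_apply_ne hgn (.inl hle)
    exact ⟨iff_of_false (by omega) himg, iff_of_false (by omega) fun h => hfix h.1,
      fun _ => .inl (by omega)⟩
  · have hZ' : g ∉ Z := fun h => lt_irrefl g (hZ g h)
    have hc : (X ++ g :: Z).count g = 1 := by simp [List.count_eq_zero.mpr, hX, hZ']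
    have hle := wordProdB_append_cons_apply_le hX hZ
    obtain ⟨himg, hfix⟩ := image_Icc_ne_and_apply_ne hgn (.inr hle)
    exact ⟨iff_of_false (by omega) himg, iff_of_false (by omega) fun h => hfix h.1,
      fun _ => .inr (by omega)⟩
  · have hX' : g ∉ X := fun h => lt_irrefl g (hX g h)
    have hR' : g ∉ R := fun h => lt_irrefl g (hR g h)
    have hZ' : g ∉ Z := fun h => lt_irrefl g (hZ g h)
    have hc : (X ++ g :: R ++ g :: Z).count g = 2 := by
      simp [List.count_eq_zero.mpr, hX', hR', hZ']
    obtain ⟨hfix, himg⟩ := apply_eq_and_image_Icc_ne_of_reducedB hg hred hX hR hZ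
    exact ⟨iff_of_false (by omega) himg, iff_of_true hc ⟨hfix, himg⟩, by omega⟩

noncomputable def negEntries (n : ℕ) (π : Equiv.Perm ℤ) : Finset ℤ :=
  (Finset.Icc 1 (n : ℤ)).filter fun j => π j < 0

lemma wordProdB_apply_mem_Icc_one_iff {g : Fin n} (hg : (g : ℕ) = 0) {l : List (Fin n)}
    (hl : g ∉ l) (x : ℤ) :
    wordProdB n l x ∈ Finset.Icc 1 (n : ℤ) ↔ x ∈ Finset.Icc 1 (n : ℤ) := by
  simpa [hg] using wordProdB_apply_mem_Icc_iff hl x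

lemma negEntries_eq_empty {g : Fin n} (hg : (g : ℕ) = 0) {w : List (Fin n)} (hw : g ∉ w) :
    negEntries n (wordProdB n w) = ∅ := by
  refine Finset.filter_false_of_mem fun x hx => ?_
  have := (wordProdB_apply_mem_Icc_one_iff hg hw x).mpr hx
  rw [Finset.mem_Icc] at this
  omega

lemma negEntries_append_cons {g : Fin n} (hg : (g : ℕ) = 0) {A B : List (Fin n)} (hA : g ∉ A)
    (hB : g ∉ B) : negEntries n (wordProdB n (A ++ g :: B)) = {(wordProdB n B).symm 1} := by
  have hn : (1 : ℤ) ≤ n := by have := g.isLt; omega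
  have hA1 := (wordProdB_apply_mem_Icc_one_iff hg hA 1).mpr (by simp [hn])
  ext x
  have hBx := wordProdB_apply_mem_Icc_one_iff hg hB x
  have hABx := wordProdB_apply_mem_Icc_one_iff hg hA (wordProdB n B x)
  simp only [negEntries, Finset.mem_filter, Finset.mem_singleton, Finset.mem_Icc,
    Equiv.eq_symm_apply, wordProdB_append, wordProdB_cons, Equiv.Perm.mul_apply,
    genB_zero_apply hg] at hBx hABx hA1 ⊢
  constructor
  · rintro ⟨hx, hneg⟩
    by_contra h1
    rw [if_neg h1, if_neg (by omega)] at hneg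
    omega
  · intro h1
    rw [if_pos h1, wordProdB_apply_neg]
    omega

lemma negEntries_cons_append_singleton {g : Fin n} (hg : (g : ℕ) = 0) {R : List (Fin n)}
    (hR : g ∉ R) (hR1 : wordProdB n R 1 ≠ 1) :
    negEntries n (wordProdB n (g :: R ++ [g])) = {1, (wordProdB n R).symm 1} := by
  have hn : (1 : ℤ) ≤ n := by have := g.isLt; omega
  have hR1' := (wordProdB_apply_mem_Icc_one_iff hg hR 1).mpr (by simp [hn])
  ext x
  have hRx := wordProdB_apply_mem_Icc_one_iff hg hR x
  simp only [negEntries, Finset.mem_filter, Finset.mem_insert, Finset.mem_singleton,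
    Finset.mem_Icc, Equiv.eq_symm_apply, wordProdB_append, wordProdB_cons, wordProdB_nil,
    mul_one, Equiv.Perm.mul_apply, genB_zero_apply hg] at hRx hR1' ⊢
  by_cases hx : x = 1
  · subst hx
    rw [if_pos rfl, wordProdB_apply_neg, if_neg (by omega), if_neg (by omega)]
    omega
  · rw [if_neg hx]
    by_cases hx' : x = -1
    · omega
    · rw [if_neg hx']
      split_ifs <;> omega

theorem count_genB_zero_of_sublist_wordOneB {w : List (Fin n)} (hsub : w.Sublist (wordOneB n))
    (hred : ReducedB n w) (g : Fin n) (hg : (g : ℕ) = 0) :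
    (w.count g = 0 ↔ (negEntries n (wordProdB n w)).card = 0) ∧
    (w.count g = 2 ↔ (negEntries n (wordProdB n w)).card = 2) ∧
    (w.count g = 1 ↔ (negEntries n (wordProdB n w)).card = 1) ∧
    (w.count g = 1 → ∀ j ∈ negEntries n (wordProdB n w), wordProdB n w j = -1 ∨ j = 1) := by
  have nil_of_lt {l : List (Fin n)} (hl : ∀ j ∈ l, j < g) : l = [] :=
    List.eq_nil_iff_forall_not_mem.mpr fun j hj => by have := Fin.lt_def.mp (hl j hj); omega
  rcases sublist_wordOneB_cases hsub g with
    hw | ⟨X, Z, rfl, hX, hZ⟩ | ⟨X, Z, rfl, hX, hZ⟩ | ⟨X, R, Z, rfl, hX, hR, hZ⟩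
  · have hc : w.count g = 0 := List.count_eq_zero.mpr hw
    rw [negEntries_eq_empty hg hw, Finset.card_empty]
    omega
  · obtain rfl := nil_of_lt hX
    have hc : ([] ++ g :: Z).count g = 1 := by simp [List.count_eq_zero.mpr hZ]
    rw [negEntries_append_cons hg List.not_mem_nil hZ, Finset.card_singleton]
    refine ⟨by omega, by omega, by omega, fun _ j hj => .inl ?_⟩
    rw [Finset.mem_singleton.mp hj]
    simp [genB_zero_apply hg]
  · obtain rfl := nil_of_lt hZ
    have hc : (X ++ [g]).count g = 1 := by simp [List.count_eq_zero.mpr hX]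
    rw [negEntries_append_cons hg hX List.not_mem_nil, Finset.card_singleton]
    exact ⟨by omega, by omega, by omega, fun _ j hj => .inr (Finset.mem_singleton.mp hj)⟩
  · obtain rfl := nil_of_lt hX
    obtain rfl := nil_of_lt hZ
    have hR' : g ∉ R := fun h => lt_irrefl g (hR g h)
    rw [List.nil_append]
    have hc : (g :: R ++ [g]).count g = 2 := by simp [List.count_eq_zero.mpr hR']
    have hR1 : wordProdB n R 1 ≠ 1 := by
      simpa [hg] using
        wordProdB_apply_ne_of_reducedB (X := []) (Z := []) (by simpa using hred) hR
    have hR1' : (wordProdB n R).symm 1 ≠ 1 := fun h =>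
      hR1 ((wordProdB n R).symm_apply_eq.mp h).symm
    rw [negEntries_cons_append_singleton hg hR' hR1, Finset.card_pair hR1'.symm]
    omega

end

theorem stmt8 (n : ℕ) (hn : 2 ≤ n) (π : Equiv.Perm ℤ)
    (w : List (Fin n)) (hsub : w.Sublist (wordOneB n)) (hred : ReducedB n w)
    (hprod : wordProdB n w = π) :
    (∀ g : Fin n, 1 ≤ g.val →
      ((w.count g = 0 ↔
          (Finset.Icc ((g.val : ℤ) + 1) (n : ℤ)).image (fun j => π j) =
            Finset.Icc ((g.val : ℤ) + 1) (n : ℤ)) ∧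
       (w.count g = 2 ↔
          (π ((g.val : ℤ) + 1) = (g.val : ℤ) + 1 ∧
            (Finset.Icc ((g.val : ℤ) + 1) (n : ℤ)).image (fun j => π j) ≠
              Finset.Icc ((g.val : ℤ) + 1) (n : ℤ))) ∧
       (w.count g = 1 →
          (π.symm ((g.val : ℤ) + 1) < (g.val : ℤ) + 1 ∨
            π ((g.val : ℤ) + 1) < (g.val : ℤ) + 1)))) ∧
    ((w.count (⟨0, by omega⟩ : Fin n) = 0 ↔
        ((Finset.Icc (1 : ℤ) (n : ℤ)).filter (fun j => π j < 0)).card = 0) ∧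
     (w.count (⟨0, by omega⟩ : Fin n) = 2 ↔
        ((Finset.Icc (1 : ℤ) (n : ℤ)).filter (fun j => π j < 0)).card = 2) ∧
     (w.count (⟨0, by omega⟩ : Fin n) = 1 ↔
        ((Finset.Icc (1 : ℤ) (n : ℤ)).filter (fun j => π j < 0)).card = 1) ∧
     (w.count (⟨0, by omega⟩ : Fin n) = 1 →
        ∀ j : ℤ, 1 ≤ j → j ≤ (n : ℤ) → π j < 0 → (π j = -1 ∨ j = 1))) := by
  subst hprod
  refine ⟨fun g hg => count_genB_of_sublist_wordOneB hsub hred g (by omega), ?_⟩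
  obtain ⟨h₀, h₂, h₁, hneg⟩ :=
    count_genB_zero_of_sublist_wordOneB hsub hred ⟨0, by omega⟩ rfl
  refine ⟨h₀, h₂, h₁, fun hc j hj₁ hjn hj => hneg hc j ?_⟩
  exact Finset.mem_filter.mpr ⟨Finset.mem_Icc.mpr ⟨hj₁, hjn⟩, hj⟩
end

section
/- Let n ≥ 3, let π ∈ D_n be boolean, and let w be any reduced expression of π that is a subsequence of the word (s_0, s_1, s_2, …, s_{n−2}, s_{n−1}, s_{n−2}, …, s_2, s_1, s_0). Then for each 2 ≤ i ≤ n−1: s_i occurs 0 times in w if and only if π({i+1,…,n}) = {i+1,…,n}; s_i occurs exactly 2 times in w if and only if π(i+1) = i+1 and π({i+1,…,n}) ≠ {i+1,…,n}; and if s_i occurs exactly once then i+1 is a top excedance of π or of π^{-1}. -/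
/-- The Coxeter generators of the even hyperoctahedral group `D_n`, realized as permutations
of `ℤ`: `s_0` exchanges `1 ↔ -2` and `-1 ↔ 2`; for `1 ≤ i ≤ n-1`, `s_i` exchanges `i ↔ i+1`
and `-i ↔ -(i+1)`. -/
def genD (n : ℕ) (i : Fin n) : Equiv.Perm ℤ :=
  if i.val = 0 then Equiv.swap 1 (-2) * Equiv.swap (-1) 2
  else Equiv.swap (i.val : ℤ) ((i.val : ℤ) + 1) * Equiv.swap (-(i.val : ℤ)) (-((i.val : ℤ) + 1))

/-- The product of a word in the generators of `D_n`. -/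
def wordProdD (n : ℕ) (w : List (Fin n)) : Equiv.Perm ℤ :=
  (w.map (genD n)).prod

/-- A word in the generators is reduced if no shorter word has the same product. -/
def ReducedD (n : ℕ) (w : List (Fin n)) : Prop :=
  ∀ w' : List (Fin n), wordProdD n w' = wordProdD n w → w.length ≤ w'.length

/-- A reflection of `D_n`: a conjugate (by an element of the group) of a generator. -/
def IsReflectionD (n : ℕ) (t : Equiv.Perm ℤ) : Prop :=
  ∃ (v : List (Fin n)) (g : Fin n), t = wordProdD n v * genD n g * (wordProdD n v)⁻¹

/-- A boolean reflection of `D_n`: a reflection admitting a reduced expression of the form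
`s_{j_1} ⋯ s_{j_{k-1}} s_{j_k} s_{j_{k-1}} ⋯ s_{j_1}` with `j_1, …, j_k` pairwise distinct. -/
def IsBooleanReflectionD (n : ℕ) (t : Equiv.Perm ℤ) : Prop :=
  IsReflectionD n t ∧
    ∃ (l : List (Fin n)) (c : Fin n), (l ++ [c]).Nodup ∧
      ReducedD n (l ++ [c] ++ l.reverse) ∧ wordProdD n (l ++ [c] ++ l.reverse) = t

/-- An element of `D_n` is boolean if it is the product of some subsequence of a reduced
word of the form `s_{j_1} ⋯ s_{j_{k-1}} s_{j_k} s_{j_{k-1}} ⋯ s_{j_1}` with distinct `j`'s. -/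
def IsBooleanD (n : ℕ) (π : Equiv.Perm ℤ) : Prop :=
  ∃ (l : List (Fin n)) (c : Fin n), (l ++ [c]).Nodup ∧
    ReducedD n (l ++ [c] ++ l.reverse) ∧
    ∃ w : List (Fin n), w.Sublist (l ++ [c] ++ l.reverse) ∧ wordProdD n w = π

/-- The word `s_0 s_1 s_2 ⋯ s_{n-2} s_{n-1} s_{n-2} ⋯ s_2 s_1 s_0`. -/
def wordD (n : ℕ) : List (Fin n) :=
  List.finRange n ++ ((List.finRange n).dropLast).reverse

/-!
A subword `w` of `s_0 s_1 ⋯ s_{n-1} ⋯ s_1 s_0` splits as `w = a ++ b` with `a` strictly increasing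
and `b` strictly decreasing, so `s_g` occurs once for each of `a`, `b` that contains it. Every
generator other than `s_g` maps `{g+1, …, n}` onto itself, which settles the case of no occurrence.
If `s_g` occurs only in `b`, follow `g+1` through `w` from the right: the letters below `g` fix it,
`s_g` sends it to `g`, and no letter other than `s_g` moves a value `≤ g` above `g`; so
`π (g+1) ≤ g`. Reversing the word gives `π⁻¹ (g+1) ≤ g` when `s_g` occurs only in `a`.
If `s_g` occurs twice, `π` fixes `g+1`. Were `{g+1, …, n}` also stable, then `{g+2, …, n}` is
stable, so by the previous case `s_{g+1}` occurs in both halves or in neither: in the first case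
repeat the argument with `g+1`, in the second both copies of `s_g` commute with everything between
them and cancel, so `w` was not reduced.
-/

section Generators

variable {n : ℕ}

theorem genD_mul_self (i : Fin n) : genD n i * genD n i = 1 := by
  have key : ∀ x y z t : ℤ, [x, y, z, t].Nodup →
      (Equiv.swap x y * Equiv.swap z t) * (Equiv.swap x y * Equiv.swap z t) = 1 := by
    intro x y z t h
    rw [← pow_two, (Equiv.Perm.disjoint_swap_swap h).commute.mul_pow, pow_two, pow_two,
      Equiv.swap_mul_self, Equiv.swap_mul_self, one_mul]
  unfold genD
  split_ifs <;> exact key _ _ _ _ (by simp <;> omega)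

theorem genD_inv (i : Fin n) : (genD n i)⁻¹ = genD n i :=
  inv_eq_of_mul_eq_one_right (genD_mul_self i)

theorem genD_apply_self (i : Fin n) (hi : i.val ≠ 0) : genD n i i.val = i.val + 1 := by
  unfold genD
  split_ifs <;> simp only [Equiv.Perm.mul_apply, Equiv.swap_apply_def] <;> split_ifs <;> omega

theorem genD_apply_succ (i : Fin n) (hi : i.val ≠ 0) : genD n i (i.val + 1) = i.val := by
  unfold genD
  split_ifs <;> simp only [Equiv.Perm.mul_apply, Equiv.swap_apply_def] <;> split_ifs <;> omega

theorem genD_apply_of_abs_lt (i : Fin n) {x : ℤ} (hx : |x| < i.val) : genD n i x = x := by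
  rw [abs_lt] at hx
  unfold genD
  split_ifs <;> simp only [Equiv.Perm.mul_apply, Equiv.swap_apply_def] <;> split_ifs <;> omega

theorem genD_apply_of_le_abs (i : Fin n) {x : ℤ} (hi : (i.val : ℤ) + 2 ≤ |x|) (hx : 3 ≤ |x|) :
    genD n i x = x := by
  rcases abs_cases x with ⟨hx', -⟩ | ⟨hx', -⟩ <;> rw [hx'] at hi hx <;> unfold genD <;>
    split_ifs <;> simp only [Equiv.Perm.mul_apply, Equiv.swap_apply_def] <;> split_ifs <;> omega

theorem genD_preimage_Iic (i : Fin n) {k : ℤ} (hk : 2 ≤ k) (hi : (i.val : ℤ) ≠ k) :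
    genD n i ⁻¹' Set.Iic k = Set.Iic k := by
  ext x
  simp only [Set.mem_preimage, Set.mem_Iic]
  unfold genD
  split_ifs <;> simp only [Equiv.Perm.mul_apply, Equiv.swap_apply_def] <;> split_ifs <;> omega

theorem genD_preimage_Ioc {i g : Fin n} (hg : 2 ≤ g.val) (hi : i ≠ g) :
    genD n i ⁻¹' Set.Ioc (g.val : ℤ) n = Set.Ioc (g.val : ℤ) n := by
  have hin : (i.val : ℤ) ≠ n := by have := i.isLt; omega
  have hig : (i.val : ℤ) ≠ g.val := by exact_mod_cast Fin.val_ne_of_ne hi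
  rw [← Set.Ioi_inter_Iic, ← Set.compl_Iic, Set.preimage_inter, Set.preimage_compl,
    genD_preimage_Iic i (by omega) hig, genD_preimage_Iic i (by omega) hin]

theorem genD_commute {i j : Fin n} (hi : i.val ≠ 0) (hij : i.val + 2 ≤ j.val) :
    Commute (genD n i) (genD n j) := by
  refine Equiv.Perm.Disjoint.commute fun x => ?_
  by_cases hx : |x| < j.val
  · exact .inr (genD_apply_of_abs_lt j hx)
  · exact .inl (genD_apply_of_le_abs i (by omega) (by omega))

end Generators

section Words

variable {n : ℕ}

@[simp]
theorem wordProdD_nil : wordProdD n [] = 1 := rfl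

@[simp]
theorem wordProdD_cons (i : Fin n) (l : List (Fin n)) :
    wordProdD n (i :: l) = genD n i * wordProdD n l := by
  simp [wordProdD]

@[simp]
theorem wordProdD_append (l₁ l₂ : List (Fin n)) :
    wordProdD n (l₁ ++ l₂) = wordProdD n l₁ * wordProdD n l₂ := by
  simp [wordProdD]

theorem wordProdD_reverse (l : List (Fin n)) : wordProdD n l.reverse = (wordProdD n l)⁻¹ := by
  induction l with
  | nil => simp
  | cons i l ih => simp [ih, genD_inv]

theorem wordProdD_apply_eq_self {l : List (Fin n)} {x : ℤ} (h : ∀ i ∈ l, genD n i x = x) :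
    wordProdD n l x = x := by
  induction l with
  | nil => rfl
  | cons i l ih =>
    rw [wordProdD_cons, Equiv.Perm.mul_apply, ih fun j hj => h j (.tail _ hj), h i (.head _)]

theorem wordProdD_preimage_eq {l : List (Fin n)} {S : Set ℤ} (h : ∀ i ∈ l, genD n i ⁻¹' S = S) :
    wordProdD n l ⁻¹' S = S := by
  induction l with
  | nil => rfl
  | cons i l ih =>
    rw [wordProdD_cons, Equiv.Perm.coe_mul, Set.preimage_comp, h i (.head _),
      ih fun j hj => h j (.tail _ hj)]

theorem commute_genD_wordProdD {g : Fin n} (hg : g.val ≠ 0) {l : List (Fin n)}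
    (h : ∀ j ∈ l, g.val + 2 ≤ j.val) : Commute (genD n g) (wordProdD n l) :=
  Commute.list_prod_right _ _ fun _ hx => by
    obtain ⟨j, hj, rfl⟩ := List.mem_map.mp hx
    exact genD_commute hg (h j hj)

variable {g : Fin n}

theorem wordProdD_apply_succ_of_lt (hg : 2 ≤ g.val) {l : List (Fin n)} (h : ∀ i ∈ l, i < g) :
    wordProdD n l (g.val + 1) = g.val + 1 :=
  wordProdD_apply_eq_self fun i hi => by
    have := h i hi
    exact genD_apply_of_le_abs i (by rw [abs_of_pos (by omega)]; omega)
      (by rw [abs_of_pos (by omega)]; omega)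

theorem wordProdD_apply_of_gt {l : List (Fin n)} (h : ∀ i ∈ l, g < i) :
    wordProdD n l g.val = g.val :=
  wordProdD_apply_eq_self fun i hi => by
    have := h i hi
    exact genD_apply_of_abs_lt i (by rw [abs_of_nonneg (by omega)]; omega)

theorem wordProdD_apply_le (hg : 2 ≤ g.val) {l : List (Fin n)} (h : ∀ i ∈ l, i ≠ g) {x : ℤ}
    (hx : x ≤ g.val) : wordProdD n l x ≤ g.val := by
  have hS := wordProdD_preimage_eq fun i hi =>
    genD_preimage_Iic (k := g.val) i (by omega) (by exact_mod_cast Fin.val_ne_of_ne (h i hi))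
  exact (Set.ext_iff.mp hS x).mpr hx

theorem wordProdD_preimage_Ioc (hg : 2 ≤ g.val) {l : List (Fin n)} (h : g ∉ l) :
    wordProdD n l ⁻¹' Set.Ioc (g.val : ℤ) n = Set.Ioc (g.val : ℤ) n :=
  wordProdD_preimage_eq fun _ hi => genD_preimage_Ioc hg (ne_of_mem_of_not_mem hi h)

theorem wordProdD_append_cons_apply_succ_le (hg : 2 ≤ g.val) {p q : List (Fin n)}
    (hp : ∀ i ∈ p, i ≠ g) (hq : ∀ i ∈ q, i < g) :
    wordProdD n (p ++ g :: q) (g.val + 1) ≤ g.val := by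
  simp only [wordProdD_append, wordProdD_cons, Equiv.Perm.mul_apply,
    wordProdD_apply_succ_of_lt hg hq, genD_apply_succ g (by omega)]
  exact wordProdD_apply_le hg hp le_rfl

theorem wordProdD_append_cons_append_cons_apply_succ (hg : 2 ≤ g.val) {p m q : List (Fin n)}
    (hp : ∀ i ∈ p, i < g) (hm : ∀ i ∈ m, g < i) (hq : ∀ i ∈ q, i < g) :
    wordProdD n (p ++ g :: (m ++ g :: q)) (g.val + 1) = g.val + 1 := by
  simp only [wordProdD_append, wordProdD_cons, Equiv.Perm.mul_apply,
    wordProdD_apply_succ_of_lt hg hq, genD_apply_succ g (by omega), wordProdD_apply_of_gt hm,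
    genD_apply_self g (by omega), wordProdD_apply_succ_of_lt hg hp]

theorem wordProdD_cancel_pair (hg : g.val ≠ 0) {p m q : List (Fin n)}
    (hm : ∀ i ∈ m, g.val + 2 ≤ i.val) :
    wordProdD n (p ++ g :: (m ++ g :: q)) = wordProdD n (p ++ (m ++ q)) := by
  simp only [wordProdD_append, wordProdD_cons]
  rw [← mul_assoc (genD n g), (commute_genD_wordProdD hg hm).eq, mul_assoc,
    ← mul_assoc (genD n g) (genD n g), genD_mul_self, one_mul]

end Words

theorem List.Pairwise.exists_eq_append_cons_of_mem {α : Type*} {R : α → α → Prop} {l : List α}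
    {x : α} (hl : l.Pairwise R) (hx : x ∈ l) :
    ∃ l₁ l₂, l = l₁ ++ x :: l₂ ∧ (∀ y ∈ l₁, R y x) ∧ ∀ y ∈ l₂, R x y := by
  obtain ⟨l₁, l₂, rfl⟩ := List.append_of_mem hx
  rw [List.pairwise_append, List.pairwise_cons] at hl
  exact ⟨l₁, l₂, rfl, fun y hy => hl.2.2 y hy x (.head _), hl.2.1.1⟩

section Windows

variable {π : Equiv.Perm ℤ} {g m : ℤ}

theorem image_Icc_add_one_eq_iff :
    (Finset.Icc (g + 1) m).image (fun j => π j) = Finset.Icc (g + 1) m ↔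
      ⇑π ⁻¹' Set.Ioc g m = Set.Ioc g m := by
  rw [← Finset.coe_inj, Finset.coe_image, Finset.coe_Icc, Set.Icc_add_one_left_eq_Ioc,
    Equiv.preimage_eq_iff_eq_image, eq_comm]

theorem preimage_Ioc_add_one (h : ⇑π ⁻¹' Set.Ioc g m = Set.Ioc g m) (hfix : π (g + 1) = g + 1) :
    ⇑π ⁻¹' Set.Ioc (g + 1) m = Set.Ioc (g + 1) m := by
  ext x
  have hx := Set.ext_iff.mp h x
  have hfix' : π x = g + 1 ↔ x = g + 1 :=
    ⟨fun h => π.injective (h.trans hfix.symm), fun h => h ▸ hfix⟩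
  simp only [Set.mem_preimage, Set.mem_Ioc] at hx ⊢
  omega

theorem preimage_Ioc_ne (hgm : g < m) (h : π.symm (g + 1) < g + 1 ∨ π (g + 1) < g + 1) :
    ⇑π ⁻¹' Set.Ioc g m ≠ Set.Ioc g m := by
  intro hW
  have key x := Set.ext_iff.mp hW x
  simp only [Set.mem_preimage, Set.mem_Ioc] at key
  rcases h with h | h
  · have := key (π.symm (g + 1))
    simp only [Equiv.apply_symm_apply] at this
    omega
  · have := key (g + 1)
    omega

end Windows

section Unimodal

variable {n : ℕ} {a b : List (Fin n)} {g : Fin n}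

theorem wordProdD_apply_succ_le_of_mem_right (hb : b.Pairwise (· > ·)) (hg : 2 ≤ g.val)
    (hga : g ∉ a) (hgb : g ∈ b) : wordProdD n (a ++ b) (g.val + 1) ≤ g.val := by
  obtain ⟨b₁, b₂, rfl, hb₁, hb₂⟩ := hb.exists_eq_append_cons_of_mem hgb
  rw [← List.append_assoc]
  refine wordProdD_append_cons_apply_succ_le hg (fun i hi => ?_) hb₂
  rcases List.mem_append.mp hi with hi | hi
  · exact ne_of_mem_of_not_mem hi hga
  · exact (hb₁ i hi).ne'

theorem wordProdD_symm_apply_succ_le_of_mem_left (ha : a.Pairwise (· < ·)) (hg : 2 ≤ g.val)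
    (hga : g ∈ a) (hgb : g ∉ b) : (wordProdD n (a ++ b)).symm (g.val + 1) ≤ g.val := by
  have := wordProdD_apply_succ_le_of_mem_right (a := b.reverse) (List.pairwise_reverse.mpr ha) hg
    (by simpa using hgb) (by simpa using hga)
  rwa [← List.reverse_append, wordProdD_reverse] at this

theorem symm_apply_lt_or_apply_lt_of_xor (ha : a.Pairwise (· < ·)) (hb : b.Pairwise (· > ·))
    (hg : 2 ≤ g.val) (h : Xor (g ∈ a) (g ∈ b)) :
    (wordProdD n (a ++ b)).symm (g.val + 1) < g.val + 1 ∨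
      wordProdD n (a ++ b) (g.val + 1) < g.val + 1 := by
  rcases h with ⟨hga, hgb⟩ | ⟨hgb, hga⟩
  · exact .inl (Int.lt_add_one_iff.mpr (wordProdD_symm_apply_succ_le_of_mem_left ha hg hga hgb))
  · exact .inr (Int.lt_add_one_iff.mpr (wordProdD_apply_succ_le_of_mem_right hb hg hga hgb))

theorem wordProdD_apply_succ_of_mem_of_mem (ha : a.Pairwise (· < ·)) (hb : b.Pairwise (· > ·))
    (hg : 2 ≤ g.val) (hga : g ∈ a) (hgb : g ∈ b) :
    wordProdD n (a ++ b) (g.val + 1) = g.val + 1 := by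
  obtain ⟨a₁, a₂, rfl, ha₁, ha₂⟩ := ha.exists_eq_append_cons_of_mem hga
  obtain ⟨b₁, b₂, rfl, hb₁, hb₂⟩ := hb.exists_eq_append_cons_of_mem hgb
  rw [List.append_assoc, List.cons_append, ← List.append_assoc a₂]
  refine wordProdD_append_cons_append_cons_apply_succ hg ha₁ (fun i hi => ?_) hb₂
  rcases List.mem_append.mp hi with hi | hi
  · exact ha₂ i hi
  · exact hb₁ i hi

theorem not_reducedD_of_forall_ne_succ (ha : a.Pairwise (· < ·)) (hb : b.Pairwise (· > ·))
    (hg : g.val ≠ 0) (hga : g ∈ a) (hgb : g ∈ b) (hsucc : ∀ i ∈ a ++ b, i.val ≠ g.val + 1) :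
    ¬ ReducedD n (a ++ b) := by
  obtain ⟨a₁, a₂, rfl, -, ha₂⟩ := ha.exists_eq_append_cons_of_mem hga
  obtain ⟨b₁, b₂, rfl, hb₁, -⟩ := hb.exists_eq_append_cons_of_mem hgb
  have hm : ∀ i ∈ a₂ ++ b₁, g.val + 2 ≤ i.val := fun i hi => by
    have hne := hsucc i (by simp only [List.mem_append, List.mem_cons] at hi ⊢; tauto)
    rcases List.mem_append.mp hi with hi | hi
    · have := ha₂ i hi; omega
    · have := hb₁ i hi; omega
  intro hred
  have := hred (a₁ ++ (a₂ ++ b₁ ++ b₂)) <| by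
    rw [← wordProdD_cancel_pair hg hm]
    simp
  simp at this

theorem not_reducedD_of_preimage_Ioc (ha : a.Pairwise (· < ·)) (hb : b.Pairwise (· > ·))
    (g : Fin n) (hg : 2 ≤ g.val) (hga : g ∈ a) (hgb : g ∈ b)
    (hW : ⇑(wordProdD n (a ++ b)) ⁻¹' Set.Ioc (g.val : ℤ) n = Set.Ioc (g.val : ℤ) n) :
    ¬ ReducedD n (a ++ b) := by
  have hW' := preimage_Ioc_add_one hW (wordProdD_apply_succ_of_mem_of_mem ha hb hg hga hgb)
  by_cases hlt : g.val + 1 < n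
  · set g' : Fin n := ⟨g.val + 1, hlt⟩
    have hg' : (g'.val : ℤ) = g.val + 1 := by simp [g']
    by_cases hboth : g' ∈ a ∧ g' ∈ b
    · exact not_reducedD_of_preimage_Ioc ha hb g' (show 2 ≤ g.val + 1 by omega) hboth.1 hboth.2
        (by rw [hg']; exact hW')
    by_cases hxor : Xor (g' ∈ a) (g' ∈ b)
    · refine absurd hW' (preimage_Ioc_ne (by omega) ?_)
      have := symm_apply_lt_or_apply_lt_of_xor ha hb (show 2 ≤ g.val + 1 by omega) hxor
      rwa [hg'] at this
    · refine not_reducedD_of_forall_ne_succ ha hb (by omega) hga hgb fun i hi heq => ?_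
      obtain rfl : i = g' := Fin.ext heq
      rw [xor_iff_or_and_not_and] at hxor
      exact hxor ⟨List.mem_append.mp hi, hboth⟩
  · exact not_reducedD_of_forall_ne_succ ha hb (by omega) hga hgb fun i _ => by omega
termination_by n - g.val

end Unimodal

theorem stmt13_general (n : ℕ) (π : Equiv.Perm ℤ)
    (w : List (Fin n)) (hsub : w.Sublist (wordD n)) (hred : ReducedD n w)
    (hprod : wordProdD n w = π) (g : Fin n) (hg : 2 ≤ g.val) :
    (w.count g = 0 ↔
      (Finset.Icc ((g.val : ℤ) + 1) (n : ℤ)).image (fun j => π j) =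
        Finset.Icc ((g.val : ℤ) + 1) (n : ℤ)) ∧
    (w.count g = 2 ↔
      (π ((g.val : ℤ) + 1) = (g.val : ℤ) + 1 ∧
        (Finset.Icc ((g.val : ℤ) + 1) (n : ℤ)).image (fun j => π j) ≠
          Finset.Icc ((g.val : ℤ) + 1) (n : ℤ))) ∧
    (w.count g = 1 →
      (π.symm ((g.val : ℤ) + 1) < (g.val : ℤ) + 1 ∨
        π ((g.val : ℤ) + 1) < (g.val : ℤ) + 1)) := by
  obtain ⟨a, b, rfl, hsa, hsb⟩ := List.sublist_append_iff.mp hsub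
  have ha : a.Pairwise (· < ·) := (List.pairwise_lt_finRange n).sublist hsa
  have hb : b.Pairwise (· > ·) := (List.pairwise_reverse.mpr
    ((List.pairwise_lt_finRange n).sublist (List.dropLast_sublist _))).sublist hsb
  have hcount : (a ++ b).count g = (if g ∈ a then 1 else 0) + (if g ∈ b then 1 else 0) := by
    rw [List.count_append, ha.nodup.count, hb.nodup.count]
  have hgn : (g.val : ℤ) < n := by exact_mod_cast g.isLt
  simp only [ne_eq, image_Icc_add_one_eq_iff, ← hprod]
  by_cases hboth : g ∈ a ∧ g ∈ b
  · have hfix := wordProdD_apply_succ_of_mem_of_mem ha hb hg hboth.1 hboth.2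
    have hW := fun hW => not_reducedD_of_preimage_Ioc ha hb g hg hboth.1 hboth.2 hW hred
    rw [show (a ++ b).count g = 2 by simp [hcount, hboth]]
    exact ⟨iff_of_false (by omega) hW, iff_of_true rfl ⟨hfix, hW⟩, by omega⟩
  by_cases hxor : Xor (g ∈ a) (g ∈ b)
  · have hesc := symm_apply_lt_or_apply_lt_of_xor ha hb hg hxor
    have hfix : wordProdD n (a ++ b) (g.val + 1) ≠ g.val + 1 := fun h => by
      have := (Equiv.symm_apply_eq _).mpr h.symm
      omega
    rw [show (a ++ b).count g = 1 by grind [xor_iff_or_and_not_and]]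
    exact ⟨iff_of_false (by omega) (preimage_Ioc_ne hgn hesc),
      iff_of_false (by omega) fun h => hfix h.1, fun _ => hesc⟩
  · have hgw : g ∉ a ++ b := by grind [xor_iff_or_and_not_and]
    have hW := wordProdD_preimage_Ioc hg hgw
    rw [List.count_eq_zero_of_not_mem hgw]
    exact ⟨iff_of_true rfl hW, iff_of_false (by omega) fun h => h.2 hW, by omega⟩

theorem stmt13 (n : ℕ) (hn : 3 ≤ n) (π : Equiv.Perm ℤ) (hbool : IsBooleanD n π)
    (w : List (Fin n)) (hsub : w.Sublist (wordD n)) (hred : ReducedD n w)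
    (hprod : wordProdD n w = π) (g : Fin n) (hg : 2 ≤ g.val) :
    (w.count g = 0 ↔
      (Finset.Icc ((g.val : ℤ) + 1) (n : ℤ)).image (fun j => π j) =
        Finset.Icc ((g.val : ℤ) + 1) (n : ℤ)) ∧
    (w.count g = 2 ↔
      (π ((g.val : ℤ) + 1) = (g.val : ℤ) + 1 ∧
        (Finset.Icc ((g.val : ℤ) + 1) (n : ℤ)).image (fun j => π j) ≠
          Finset.Icc ((g.val : ℤ) + 1) (n : ℤ))) ∧
    (w.count g = 1 →
      (π.symm ((g.val : ℤ) + 1) < (g.val : ℤ) + 1 ∨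
        π ((g.val : ℤ) + 1) < (g.val : ℤ) + 1)) :=
  stmt13_general n π w hsub hred hprod g hg
end

section
/- Let n ≥ 2 and let W be the Coxeter group of affine type Ã_n with generators s_0, s_1, …, s_n indexed by ℤ/(n+1). Then every boolean reflection of W of length 2n+1 equals s_{i+1}·s_{i+2}·⋯·s_n·s_0·s_1·⋯·s_{i−1}·s_i·s_{i−1}·⋯·s_1·s_0·s_n·⋯·s_{i+2}·s_{i+1} for some i ∈ ℤ/(n+1) (indices taken modulo n+1). -/
/-!
Read a boolean palindrome `l ++ [c] ++ l.reverse` from the middle outwards. If a new letter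
`s_j` commuted with every letter already read, it could be cancelled against its mirror copy,
contradicting reducedness; so `j` is adjacent, in the cycle `ℤ/(n+1)`, to a letter already read,
and the letters read so far always form a cyclic interval `a, …, a+k`. By the braid relation
`s_a s_{a+1} s_a = s_{a+1} s_a s_{a+1}` and commutation of non-adjacent generators, the palindrome
does not depend on the order in which the interval was grown: it is `s_a ⋯ s_{a+k} ⋯ s_a`.
Length `2n+1` makes the interval the whole cycle, which is the claimed word with `i = a - 1`.
-/

/-- The Coxeter matrix of affine type `Ã_n`, on the index set `ℤ/(n+1)`: the Coxeter graph
is a cycle on `n+1` vertices, with `M i j = 3` when `j ≡ i ± 1` and `M i j = 2` otherwise. -/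
def affineAMatrix (n : ℕ) : CoxeterMatrix (ZMod (n + 1)) where
  M := fun i j => if i = j then 1 else if j = i + 1 ∨ i = j + 1 then 3 else 2
  isSymm := by
    ext i j
    show (if j = i then 1 else if i = j + 1 ∨ j = i + 1 then 3 else 2) =
         (if i = j then 1 else if j = i + 1 ∨ i = j + 1 then 3 else 2)
    rcases eq_or_ne i j with h | h
    · subst h; rfl
    · rw [if_neg (Ne.symm h), if_neg h, if_congr or_comm rfl rfl]
  diagonal := by intro i; simp
  off_diagonal := by
    intro i j h
    show (if i = j then 1 else if j = i + 1 ∨ i = j + 1 then 3 else 2) ≠ 1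
    rw [if_neg h]
    split <;> omega

/-- The canonical Coxeter system of affine type `Ã_n`. -/
def affineACoxeterSystem (n : ℕ) :
    CoxeterSystem (affineAMatrix n) (affineAMatrix n).Group :=
  (affineAMatrix n).toCoxeterSystem

/-- The word `s_{i+1} s_{i+2} ⋯ s_{i+n} s_i s_{i+n} ⋯ s_{i+2} s_{i+1}` (indices mod `n+1`),
i.e. `s_{i+1} ⋯ s_n s_0 ⋯ s_{i-1} s_i s_{i-1} ⋯ s_0 s_n ⋯ s_{i+1}`. -/
def affineBooleanWord (n : ℕ) (i : ZMod (n + 1)) : List (ZMod (n + 1)) :=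
  ((List.range n).map (fun k => i + 1 + (k : ZMod (n + 1)))) ++ [i] ++
    ((List.range n).map (fun k => i + 1 + (k : ZMod (n + 1)))).reverse

namespace CoxeterSystem

variable {B W : Type*} [Group W] {M : CoxeterMatrix B} (cs : CoxeterSystem M W)

local prefix:100 "s " => cs.simple
local prefix:100 "π " => cs.wordProd

theorem simple_commute_of_M_eq_two {i j : B} (h : M i j = 2) : Commute (s i) (s j) := by
  have hsq := cs.simple_mul_simple_pow i j
  rw [h, pow_two] at hsq
  calc s i * s j = (s i * s j)⁻¹ := eq_inv_of_mul_eq_one_left hsq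
    _ = s j * s i := by rw [mul_inv_rev, inv_simple, inv_simple]

theorem simple_braid_of_M_eq_three {i j : B} (h : M i j = 3) :
    s i * s j * s i = s j * s i * s j := by
  have := cs.wordProd_braidWord_eq j i
  simpa [braidWord, M.symmetric j i, h, alternatingWord, wordProd, mul_assoc] using this

theorem wordProd_cons_palindrome (j c : B) (u : List B) :
    π (j :: u ++ [c] ++ (j :: u).reverse) = s j * π (u ++ [c] ++ u.reverse) * s j := by
  simp [wordProd_append, wordProd_cons, mul_assoc]

theorem IsReduced.of_cons_palindrome {j c : B} {u : List B}
    (h : cs.IsReduced (j :: u ++ [c] ++ (j :: u).reverse)) :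
    cs.IsReduced (u ++ [c] ++ u.reverse) := by
  have hdrop : (j :: u ++ [c] ++ (j :: u).reverse).drop 1 = u ++ [c] ++ u.reverse ++ [j] := by
    simp
  have htail := (h.drop 1).take (u ++ [c] ++ u.reverse).length
  rwa [hdrop, List.take_left] at htail

theorem exists_not_commute_of_isReduced_palindrome {j c : B} {u : List B}
    (h : cs.IsReduced (j :: u ++ [c] ++ (j :: u).reverse)) :
    ∃ y ∈ u ++ [c], ¬Commute (s j) (s y) := by
  by_contra! hcomm
  have hmid : Commute (s j) (π (u ++ [c] ++ u.reverse)) := by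
    refine Commute.list_prod_right _ _ fun x hx => ?_
    obtain ⟨y, hy, rfl⟩ := List.mem_map.mp hx
    exact hcomm y (by simp only [List.mem_append, List.mem_reverse] at hy ⊢; tauto)
  have hcancel : π (j :: u ++ [c] ++ (j :: u).reverse) = π (u ++ [c] ++ u.reverse) := by
    rw [wordProd_cons_palindrome, hmid.eq, mul_assoc, simple_mul_simple_self, mul_one]
  have hshort := cs.length_wordProd_le (u ++ [c] ++ u.reverse)
  rw [← hcancel, h.eq] at hshort
  simp at hshort

end CoxeterSystem

namespace AffineA

open CoxeterSystem

variable {n : ℕ}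

local prefix:100 "s " => CoxeterSystem.simple (affineACoxeterSystem n)
local prefix:100 "π " => CoxeterSystem.wordProd (affineACoxeterSystem n)

theorem natCast_inj_of_le {a b : ℕ} (ha : a ≤ n) (hb : b ≤ n)
    (h : (a : ZMod (n + 1)) = b) : a = b := by
  rwa [ZMod.natCast_eq_natCast_iff', Nat.mod_eq_of_lt (by omega),
    Nat.mod_eq_of_lt (by omega)] at h

theorem natCast_self_add_one : (n : ZMod (n + 1)) + 1 = 0 := by
  exact_mod_cast ZMod.natCast_self (n + 1)

theorem affineAMatrix_M_eq_two {i j : ZMod (n + 1)} (hij : i ≠ j) (hj : j ≠ i + 1)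
    (hi : i ≠ j + 1) : (affineAMatrix n).M i j = 2 := by
  simp [affineAMatrix, hij, hj, hi]

theorem affineAMatrix_M_add_one (hn : 1 ≤ n) (i : ZMod (n + 1)) :
    (affineAMatrix n).M i (i + 1) = 3 := by
  have h : ((1 : ℕ) : ZMod (n + 1)) ≠ ((0 : ℕ) : ZMod (n + 1)) :=
    fun h => absurd (natCast_inj_of_le hn (Nat.zero_le n) h) one_ne_zero
  simp_all [affineAMatrix]

theorem affineAMatrix_M_add_natCast {m : ℕ} (hm : 2 ≤ m) (hmn : m + 1 ≤ n) (i : ZMod (n + 1)) :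
    (affineAMatrix n).M i (i + m) = 2 := by
  have hne {a b : ℕ} (ha : a ≤ n) (hb : b ≤ n) (hab : a ≠ b) :
      (a : ZMod (n + 1)) ≠ b := fun h => hab (natCast_inj_of_le ha hb h)
  refine affineAMatrix_M_eq_two ?_ ?_ ?_
  · simpa using (hne (a := 0) (b := m) (by omega) (by omega) (by omega)).symm
  · simpa using hne (a := m) (b := 1) (by omega) (by omega) (by omega)
  · intro h
    have h' : ((0 : ℕ) : ZMod (n + 1)) = ((m + 1 : ℕ) : ZMod (n + 1)) := by
      push_cast; linear_combination h
    exact absurd (natCast_inj_of_le (Nat.zero_le n) hmn h') (by omega)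

theorem eq_add_one_or_of_not_commute {i j : ZMod (n + 1)} (hij : i ≠ j)
    (h : ¬Commute (s i) (s j)) : j = i + 1 ∨ i = j + 1 := by
  by_contra! hadj
  exact h (simple_commute_of_M_eq_two _ (affineAMatrix_M_eq_two hij hadj.1 hadj.2))

def intervalWord (a : ZMod (n + 1)) (k : ℕ) : List (ZMod (n + 1)) :=
  (List.range k).map fun m : ℕ => a + m

theorem intervalWord_succ_left (a : ZMod (n + 1)) (k : ℕ) :
    intervalWord a (k + 1) = a :: intervalWord (a + 1) k := by
  simp only [intervalWord, List.range_succ_eq_map, List.map_cons, List.map_map]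
  congr 1
  · simp
  · congr 1; funext m; simp only [Function.comp, Nat.cast_succ]; ring

theorem intervalWord_succ_right (a : ZMod (n + 1)) (k : ℕ) :
    intervalWord a (k + 1) = intervalWord a k ++ [a + k] := by
  simp [intervalWord, List.range_succ]

-- In `affineBooleanWord` the binder `k` is elaborated in `ZMod (n + 1)`, so `List.range n` is
-- coerced through the list monad; this unfolds that coercion.
theorem affineBooleanWord_eq (i : ZMod (n + 1)) : affineBooleanWord n i =
    intervalWord (i + 1) n ++ [i] ++ (intervalWord (i + 1) n).reverse := by
  simp only [affineBooleanWord, intervalWord, bind_pure_comp, Functor.map, List.map_map]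
  rfl

theorem eq_sub_one_or_eq_add_of_adj {a j y : ZMod (n + 1)} {k : ℕ}
    (hj : j ∉ intervalWord a (k + 1)) (hy : y ∈ intervalWord a (k + 1))
    (hadj : y = j + 1 ∨ j = y + 1) (hk : k + 1 ≤ n) :
    j = a - 1 ∨ (j = a + (k + 1 : ℕ) ∧ k + 2 ≤ n) := by
  simp only [intervalWord, List.mem_map, List.mem_range, not_exists, not_and] at hj hy
  obtain ⟨m, hm, rfl⟩ := hy
  rcases hadj with h | h
  · rcases m with _ | m
    · left; push_cast at h; linear_combination -h
    · exact (hj m (by omega) (by push_cast at h; linear_combination h)).elim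
  · rcases Nat.lt_or_ge (m + 1) (k + 1) with hlt | hge
    · exact (hj (m + 1) hlt (by push_cast; linear_combination -h)).elim
    obtain rfl : k = m := by omega
    by_cases hk2 : k + 2 ≤ n
    · exact Or.inr ⟨by push_cast; linear_combination h, hk2⟩
    · obtain rfl : n = k + 1 := by omega
      have hcycle := natCast_self_add_one (n := k + 1)
      push_cast at hcycle
      left; linear_combination h + hcycle

/-- `s_a s_{a+1} ⋯ s_{a+k} ⋯ s_{a+1} s_a`, the reflection of the cyclic interval `a, …, a+k`. -/
def intervalReflection : ZMod (n + 1) → ℕ → (affineAMatrix n).Group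
  | a, 0 => s a
  | a, k + 1 => s a * intervalReflection (a + 1) k * s a

theorem wordProd_intervalWord_palindrome (a : ZMod (n + 1)) (k : ℕ) :
    π (intervalWord a k ++ [a + k] ++ (intervalWord a k).reverse) = intervalReflection a k := by
  induction k generalizing a with
  | zero => simp [intervalWord, intervalReflection]
  | succ k ih =>
    have hshift : a + ((k + 1 : ℕ) : ZMod (n + 1)) = a + 1 + k := by push_cast; ring
    rw [intervalWord_succ_left, wordProd_cons_palindrome, intervalReflection, ← ih, hshift]

theorem wordProd_affineBooleanWord (i : ZMod (n + 1)) :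
    π (affineBooleanWord n i) = intervalReflection (i + 1) n := by
  have hmid : i + 1 + (n : ZMod (n + 1)) = i := by linear_combination natCast_self_add_one
  rw [affineBooleanWord_eq, ← wordProd_intervalWord_palindrome, hmid]

theorem intervalReflection_succ_right (a : ZMod (n + 1)) {k : ℕ} (hk : k + 2 ≤ n) :
    intervalReflection a (k + 1) =
      s (a + (k + 1 : ℕ)) * intervalReflection a k * s (a + (k + 1 : ℕ)) := by
  induction k generalizing a with
  | zero =>
    simpa [intervalReflection] using
      simple_braid_of_M_eq_three _ (affineAMatrix_M_add_one (by omega) a)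
  | succ k ih =>
    have hcomm : Commute (s a) (s (a + (k + 2 : ℕ))) :=
      simple_commute_of_M_eq_two _ (affineAMatrix_M_add_natCast (by omega) (by omega) a)
    have hshift : a + 1 + ((k + 1 : ℕ) : ZMod (n + 1)) = a + (k + 2 : ℕ) := by push_cast; ring
    rw [intervalReflection, ih (a + 1) (by omega), hshift, intervalReflection]
    calc s a * (s (a + (k + 2 : ℕ)) * intervalReflection (a + 1) k * s (a + (k + 2 : ℕ))) * s a
        = (s a * s (a + (k + 2 : ℕ))) * intervalReflection (a + 1) k *
            (s (a + (k + 2 : ℕ)) * s a) := by group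
      _ = (s (a + (k + 2 : ℕ)) * s a) * intervalReflection (a + 1) k *
            (s a * s (a + (k + 2 : ℕ))) := by rw [hcomm.eq, hcomm.symm.eq]
      _ = _ := by group

theorem exists_intervalReflection_of_isReduced {c : ZMod (n + 1)} :
    ∀ {u : List (ZMod (n + 1))}, (u ++ [c]).Nodup →
      (affineACoxeterSystem n).IsReduced (u ++ [c] ++ u.reverse) →
      ∃ a, (u ++ [c]).Perm (intervalWord a (u.length + 1)) ∧
        π (u ++ [c] ++ u.reverse) = intervalReflection a u.length
  | [], _, _ => ⟨c, by simp [intervalWord], by simp [intervalReflection]⟩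
  | j :: u, hnd, hred => by
    rw [List.cons_append, List.nodup_cons] at hnd
    obtain ⟨a, hperm, hprod⟩ := exists_intervalReflection_of_isReduced hnd.2
      hred.of_cons_palindrome
    have hj : j ∉ intervalWord a (u.length + 1) := hperm.mem_iff.not.mp hnd.1
    obtain ⟨y, hy, hjy⟩ := exists_not_commute_of_isReduced_palindrome _ hred
    replace hy := hperm.mem_iff.mp hy
    have hk : u.length + 1 ≤ n := by
      simpa [ZMod.card] using (List.nodup_cons.mpr hnd).length_le_card
    have hadj := eq_add_one_or_of_not_commute (fun h : j = y => hj (h ▸ hy)) hjy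
    rcases eq_sub_one_or_eq_add_of_adj hj hy hadj hk with rfl | ⟨rfl, hk2⟩
    · refine ⟨a - 1, ?_, ?_⟩
      · rw [List.length_cons, intervalWord_succ_left, sub_add_cancel]
        exact hperm.cons _
      · rw [wordProd_cons_palindrome, hprod, List.length_cons, intervalReflection, sub_add_cancel]
    · refine ⟨a, ?_, ?_⟩
      · rw [List.length_cons, intervalWord_succ_right]
        exact (hperm.cons _).trans (List.perm_append_singleton _ _).symm
      · rw [wordProd_cons_palindrome, hprod, List.length_cons, intervalReflection_succ_right a hk2]

end AffineA

theorem stmt14_general (n : ℕ) (t : (affineAMatrix n).Group)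
    (hbool : ∃ (l : List (ZMod (n + 1))) (c : ZMod (n + 1)), (l ++ [c]).Nodup ∧
      (affineACoxeterSystem n).IsReduced (l ++ [c] ++ l.reverse) ∧
      (affineACoxeterSystem n).wordProd (l ++ [c] ++ l.reverse) = t)
    (hlen : (affineACoxeterSystem n).length t = 2 * n + 1) :
    ∃ i : ZMod (n + 1), t = (affineACoxeterSystem n).wordProd (affineBooleanWord n i) := by
  obtain ⟨l, c, hnd, hred, rfl⟩ := hbool
  have hl : l.length = n := by
    have := hred.eq
    rw [hlen] at this
    simp only [List.length_append, List.length_singleton, List.length_reverse] at this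
    omega
  obtain ⟨a, -, ha⟩ := AffineA.exists_intervalReflection_of_isReduced hnd hred
  exact ⟨a - 1, by rw [ha, hl, AffineA.wordProd_affineBooleanWord, sub_add_cancel]⟩

theorem stmt14 (n : ℕ) (hn : 2 ≤ n) (t : (affineAMatrix n).Group)
    (hrefl : (affineACoxeterSystem n).IsReflection t)
    (hbool : ∃ (l : List (ZMod (n + 1))) (c : ZMod (n + 1)), (l ++ [c]).Nodup ∧
      (affineACoxeterSystem n).IsReduced (l ++ [c] ++ l.reverse) ∧
      (affineACoxeterSystem n).wordProd (l ++ [c] ++ l.reverse) = t)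
    (hlen : (affineACoxeterSystem n).length t = 2 * n + 1) :
    ∃ i : ZMod (n + 1), t = (affineACoxeterSystem n).wordProd (affineBooleanWord n i) :=
  stmt14_general n t hbool hlen
end
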